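/- arXiv:1609.05854 — 7 statements merged into one kernel-verified Lean document; each statement's English description precedes it below -/
import Mathlib

section
/- For any graph G with no isolated vertices, the brushing number of G is at most the zero-forcing number of the line graph of G, i.e., B(G) ≤ Z(L(G)). -/
open scoped BigOperators

namespace Paper

variable {V : Type*}

/-- The zero-forcing closure: vertices that eventually become black starting from `S`. -/
inductive ZFClosure (G : SimpleGraph V) (S : Set V) : V → Prop
  | init {v : V} : v ∈ S → ZFClosure G S v
  | force {v w : V} : ZFClosure G S v → G.Adj v w →
      (∀ u, G.Adj v u → u ≠ w → ZFClosure G S u) → ZFClosure G S w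

/-- `S` is a zero-forcing set of `G`. -/
def IsZeroForcingSet (G : SimpleGraph V) (S : Set V) : Prop :=
  ∀ v : V, ZFClosure G S v

/-- The zero-forcing number `Z(G)`. -/
noncomputable def zfNumber (G : SimpleGraph V) : ℕ :=
  sInf {n | ∃ S : Set V, IsZeroForcingSet G S ∧ S.ncard = n}

/-- A state of the brushing process: the set of vertices that have fired (and hence
are clean), the set of dirty edges, and the number of brushes at each vertex. -/
structure BrushConfig (V : Type*) where
  fired : Set V
  dirty : Set (Sym2 V)
  brushes : V → ℕ

open Classical in
def BrushStep (G : SimpleGraph V) (restricted : Bool) (c c' : BrushConfig V) : Prop :=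
  ∃ (v : V) (f : Sym2 V → ℕ),
    v ∉ c.fired ∧
    (∀ e ∈ c.dirty, v ∈ e → if restricted then f e = 1 else 1 ≤ f e) ∧
    (∑ᶠ e ∈ {e ∈ c.dirty | v ∈ e}, f e) ≤ c.brushes v ∧
    c'.fired = insert v c.fired ∧
    c'.dirty = {e ∈ c.dirty | v ∉ e} ∧
    ∀ w : V, c'.brushes w =
      (if w = v then 0 else c.brushes w) + c.dirty.indicator f s(v, w)

/-- The initial brush configuration `ω` cleans the graph `G`:  starting with every vertex
and every edge dirty, some sequence of firings results in every vertex having fired. -/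
def Cleans (G : SimpleGraph V) (restricted : Bool) (ω : V → ℕ) : Prop :=
  ∃ c : BrushConfig V,
    Relation.ReflTransGen (BrushStep G restricted) ⟨∅, G.edgeSet, ω⟩ c ∧
    c.fired = Set.univ

/-- The brushing number `B(G)` (several brushes may traverse a single edge). -/
noncomputable def brushNumber (G : SimpleGraph V) : ℕ :=
  sInf {n | ∃ ω : V → ℕ, Cleans G false ω ∧ ∑ᶠ v, ω v = n}

/-- The restricted brushing number `b(G)` (each edge is traversed by exactly one brush). -/
noncomputable def brushNumber' (G : SimpleGraph V) : ℕ :=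
  sInf {n | ∃ ω : V → ℕ, Cleans G true ω ∧ ∑ᶠ v, ω v = n}

/-!
Let `S` be a zero forcing set of `L(G)` and stamp every edge of `G` with the round of parallel
forcing in which it turns black. Fire the vertices of `G` in the order of the time at which all
their edges are black, each vertex sending one brush along every dirty edge; a vertex then needs
as many brushes of its own as it has later neighbours beyond its earlier ones. If an edge
`g = xy` outside `S` is forced by an edge `xt`, then every other edge at `x` and every edge at
`t` is black before `g`, so `t` fires before `x`, and `x` before `y` once ties are broken in
favour of such forcing ends. Hence a vertex has at most one later neighbour across an edge
outside `S`, and if it has one it also has an earlier neighbour; one brush per edge of `S`, placed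
at its earlier end, therefore cleans `G`.
-/

open SimpleGraph

section Brushing

variable (G : SimpleGraph V) (ω : V → ℕ)

open Classical in
/-- The state of the brushing process once the vertices of `F` have fired, each sending one brush
along every dirty edge. -/
noncomputable def firingStage (F : Set V) : BrushConfig V where
  fired := F
  dirty := {e ∈ G.edgeSet | ∀ u ∈ F, u ∉ e}
  brushes w := if w ∈ F then 0 else ω w + (G.neighborSet w ∩ F).ncard

variable {G ω}

lemma dirty_firingStage_incident_eq_image {F : Set V} {v : V} (hv : v ∉ F) :
    {e ∈ (firingStage G ω F).dirty | v ∈ e} = (s(v, ·)) '' (G.neighborSet v \ F) := by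
  ext e
  constructor
  · rintro ⟨⟨he, hF⟩, hve⟩
    obtain ⟨w, rfl⟩ := Sym2.mem_iff_exists.1 hve
    exact ⟨w, ⟨he, fun hw => hF w hw (Sym2.mem_mk_right v w)⟩, rfl⟩
  · rintro ⟨w, ⟨hvw, hw⟩, rfl⟩
    refine ⟨⟨hvw, fun u hu hue => ?_⟩, Sym2.mem_mk_left v w⟩
    rcases Sym2.mem_iff.1 hue with rfl | rfl
    exacts [hv hu, hw hu]

open Classical in
lemma brushes_firingStage_insert [Finite V] {F : Set V} {v : V} (hv : v ∉ F) (w : V) :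
    (firingStage G ω (insert v F)).brushes w =
      (if w = v then 0 else (firingStage G ω F).brushes w) +
        (firingStage G ω F).dirty.indicator (fun _ => 1) s(v, w) := by
  by_cases hwv : w = v
  · subst hwv
    simp [firingStage, Set.indicator_of_notMem]
  by_cases hwF : w ∈ F
  · rw [Set.indicator_of_notMem fun h => h.2 w hwF (Sym2.mem_mk_right v w)]
    simp [firingStage, hwF, hwv]
  by_cases hvw : G.Adj v w
  · have hdirty : s(v, w) ∈ (firingStage G ω F).dirty :=
      ⟨hvw, fun u hu hue => by rcases Sym2.mem_iff.1 hue with rfl | rfl; exacts [hv hu, hwF hu]⟩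
    rw [Set.indicator_of_mem hdirty]
    simp [firingStage, hwv, hwF, Set.inter_insert_of_mem (G.mem_neighborSet w v |>.2 hvw.symm),
      Set.ncard_insert_of_notMem (fun h : v ∈ G.neighborSet w ∩ F => hv h.2), add_assoc]
  · rw [Set.indicator_of_notMem fun h => hvw h.1]
    simp [firingStage, hwv, hwF,
      Set.inter_insert_of_notMem (fun h : v ∈ G.neighborSet w => hvw (G.adj_symm h))]

lemma brushStep_firingStage [Finite V] (r : Bool) {F : Set V} {v : V} (hv : v ∉ F)
    (hbrushes : (G.neighborSet v \ F).ncard ≤ ω v + (G.neighborSet v ∩ F).ncard) :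
    BrushStep G r (firingStage G ω F) (firingStage G ω (insert v F)) := by
  refine ⟨v, fun _ => 1, hv, fun _ _ _ => by cases r <;> simp, ?_, rfl, ?_,
    brushes_firingStage_insert hv⟩
  · rw [finsum_one, dirty_firingStage_incident_eq_image hv,
      Set.ncard_image_of_injective _ fun _ _ h => Sym2.congr_right.1 h]
    simpa [firingStage, hv] using hbrushes
  · ext e
    simp only [firingStage, Set.mem_insert_iff, forall_eq_or_imp, Set.mem_ofPred_eq]
    tauto

lemma cleans_of_ncard_later_le [Fintype V] {K : Type*} [LinearOrder K] (r : Bool) (κ : V → K)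
    (hκ : Function.Injective κ)
    (hω : ∀ v,
      {w | G.Adj v w ∧ κ v < κ w}.ncard ≤ ω v + {w | G.Adj v w ∧ κ w < κ v}.ncard) :
    Cleans G r ω := by
  classical
  have hreach : ∀ F : Finset V, (∀ w ∈ F, ∀ u, κ u < κ w → u ∈ F) →
      Relation.ReflTransGen (BrushStep G r) (firingStage G ω ∅) (firingStage G ω F) := by
    intro F
    induction F using Finset.induction_on_max_value κ with
    | empty => exact fun _ => by simpa using Relation.ReflTransGen.refl
    | insert a s ha hmax ih =>
      intro hlower
      have hs : ∀ w ∈ s, ∀ u, κ u < κ w → u ∈ s := fun w hw u hu =>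
        (Finset.mem_insert.1 (hlower w (Finset.mem_insert_of_mem hw) u hu)).resolve_left
          (by rintro rfl; exact (hu.trans_le (hmax w hw)).false)
      have hmem : ∀ w, w ≠ a → (w ∈ s ↔ κ w < κ a) := fun w hwa =>
        ⟨fun hw => (hmax w hw).lt_of_ne (hκ.ne hwa),
          fun hw => (Finset.mem_insert.1
            (hlower a (Finset.mem_insert_self a s) w hw)).resolve_left hwa⟩
      have hlater : G.neighborSet a \ s = {w | G.Adj a w ∧ κ a < κ w} := by
        ext w
        refine and_congr_right fun haw => ?_
        rw [Finset.mem_coe, hmem w haw.ne.symm, not_lt]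
        exact ⟨fun h => h.lt_of_ne (hκ.ne haw.ne), le_of_lt⟩
      have hearlier : G.neighborSet a ∩ s = {w | G.Adj a w ∧ κ w < κ a} := by
        ext w
        exact and_congr_right fun haw => hmem w haw.ne.symm
      rw [Finset.coe_insert]
      refine (ih hs).tail (brushStep_firingStage r (by simpa using ha) ?_)
      rw [hlater, hearlier]
      exact hω a
  have hinit : firingStage G ω ∅ = ⟨∅, G.edgeSet, ω⟩ := by
    simp [firingStage]
  exact ⟨_, hinit ▸ hreach Finset.univ (by simp), by simp [firingStage]⟩

end Brushing

lemma sum_ncard_mem_lt_le [Fintype V] {K : Type*} [LinearOrder K] (κ : V → K)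
    (T : Set (Sym2 V)) :
    ∑ v, {w | s(v, w) ∈ T ∧ κ v < κ w}.ncard ≤ T.ncard := by
  classical
  let P : V × V → Prop := fun p => s(p.1, p.2) ∈ T ∧ κ p.1 < κ p.2
  calc ∑ v, {w | s(v, w) ∈ T ∧ κ v < κ w}.ncard
      = ∑ v, ∑ w, if P (v, w) then 1 else 0 := by
        simp only [Set.ncard_eq_toFinset_card', Set.toFinset_ofPred, Finset.card_filter, P]
    _ = {p | P p}.ncard := by
        rw [← Fintype.sum_prod_type (f := fun p => if P p then 1 else 0),
          Set.ncard_eq_toFinset_card', Set.toFinset_ofPred, Finset.card_filter]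
    _ ≤ T.ncard := by
        refine Set.ncard_le_ncard_of_injOn (fun p => s(p.1, p.2)) (fun p hp => hp.1) ?_
        rintro ⟨v, w⟩ hvw ⟨v', w'⟩ hvw' heq
        rcases Sym2.eq_iff.1 heq with ⟨rfl, rfl⟩ | ⟨rfl, rfl⟩
        · rfl
        · exact (hvw.2.trans hvw'.2).false.elim

section ZeroForcing

variable {W : Type*} (H : SimpleGraph W) (S : Set W)

def forcingRound : ℕ → Set W
  | 0 => S
  | n + 1 => forcingRound n ∪ {w | ∃ v ∈ forcingRound n, H.Adj v w ∧
      ∀ u, H.Adj v u → u ≠ w → u ∈ forcingRound n}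

lemma monotone_forcingRound : Monotone (forcingRound H S) :=
  monotone_nat_of_le_succ fun _ => Set.subset_union_left

variable {H S}

lemma ZFClosure.exists_mem_forcingRound [Finite W] {w : W} (hw : ZFClosure H S w) :
    ∃ n, w ∈ forcingRound H S n := by
  induction hw with
  | init hw => exact ⟨0, hw⟩
  | @force v w _ hvw _ ihv ihu =>
    obtain ⟨m, hm⟩ := ihv
    choose! n hn using ihu
    obtain ⟨M, hM⟩ := Finite.exists_le n
    have hmono := monotone_forcingRound H S
    exact ⟨max m M + 1, Or.inr ⟨v, hmono (le_max_left m M) hm, hvw, fun u hvu huw =>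
      hmono ((hM u).trans (le_max_right m M)) (hn u hvu huw)⟩⟩

variable (H S)

def IsForcingTime (τ : W → ℕ) : Prop :=
  ∀ w ∉ S, ∃ v, H.Adj v w ∧ τ v < τ w ∧ ∀ u, H.Adj v u → u ≠ w → τ u < τ w

variable {H S}

lemma IsZeroForcingSet.exists_isForcingTime [Finite W] (hS : IsZeroForcingSet H S) :
    ∃ τ, IsForcingTime H S τ := by
  classical
  let τ w := Nat.find (hS w).exists_mem_forcingRound
  have hτ : ∀ w, w ∈ forcingRound H S (τ w) := fun w =>
    Nat.find_spec (hS w).exists_mem_forcingRound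
  refine ⟨τ, fun w hw => ?_⟩
  obtain ⟨n, hn⟩ : ∃ n, τ w = n + 1 :=
    Nat.exists_eq_succ_of_ne_zero fun h => hw (by simpa [h, forcingRound] using hτ w)
  have hwn : w ∉ forcingRound H S n := Nat.find_min _ (show n < τ w by omega)
  obtain ⟨v, hv, hvw, hu⟩ := (hn ▸ hτ w).resolve_left hwn
  exact ⟨v, hvw, by rw [hn]; exact Nat.lt_succ_of_le (Nat.find_min' _ hv),
    fun u hvu huw => by rw [hn]; exact Nat.lt_succ_of_le (Nat.find_min' _ (hu u hvu huw))⟩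

end ZeroForcing

section LineGraph

variable {G : SimpleGraph V} (τ : G.edgeSet → ℕ)

noncomputable def vertexTime (v : V) : ℕ :=
  ⨆ g : {g : G.edgeSet // v ∈ (g : Sym2 V)}, τ g

variable {τ}

lemma le_vertexTime [Finite V] {g : G.edgeSet} {v : V} (hv : v ∈ (g : Sym2 V)) :
    τ g ≤ vertexTime τ v :=
  le_ciSup (f := fun g : {g : G.edgeSet // v ∈ (g : Sym2 V)} => τ g)
    (Finite.bddAbove_range _) ⟨g, hv⟩

lemma vertexTime_le {v : V} {m : ℕ} (h : ∀ g : G.edgeSet, v ∈ (g : Sym2 V) → τ g ≤ m) :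
    vertexTime τ v ≤ m :=
  ciSup_le' fun g => h g g.2

lemma vertexTime_lt {v : V} {m : ℕ} (h : ∀ g : G.edgeSet, v ∈ (g : Sym2 V) → τ g < m)
    (hm : 0 < m) : vertexTime τ v < m :=
  (vertexTime_le fun g hg => Nat.le_pred_of_lt (h g hg)).trans_lt (Nat.pred_lt hm.ne')

variable (τ)

/-- What a force of `g` by an edge `vt` of `G` yields at its common end `v` with `g`. -/
def IsForcingEnd (g : G.edgeSet) (v : V) : Prop :=
  v ∈ (g : Sym2 V) ∧ (∀ h : G.edgeSet, v ∈ (h : Sym2 V) → h ≠ g → τ h < τ g) ∧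
    ∃ t, G.Adj v t ∧ vertexTime τ t < τ g

variable {τ}

lemma IsForcingEnd.vertexTime_eq [Finite V] {g : G.edgeSet} {v : V} (hg : IsForcingEnd τ g v) :
    vertexTime τ v = τ g := by
  refine le_antisymm (vertexTime_le fun h hv => ?_) (le_vertexTime hg.1)
  rcases eq_or_ne h g with rfl | hne
  exacts [le_rfl, (hg.2.1 h hv hne).le]

lemma IsForcingEnd.unique {g g' : G.edgeSet} {v : V} (hg : IsForcingEnd τ g v)
    (hg' : IsForcingEnd τ g' v) : g = g' := by
  by_contra hne
  exact (hg.2.1 g' hg'.1 (Ne.symm hne)).asymm (hg'.2.1 g hg.1 hne)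

lemma IsForcingTime.exists_isForcingEnd {S : Set G.edgeSet} (hτ : IsForcingTime G.lineGraph S τ)
    {g : G.edgeSet} (hg : g ∉ S) : ∃ v, IsForcingEnd τ g v := by
  obtain ⟨e, heg, hτe, hforce⟩ := hτ g hg
  obtain ⟨hne, x, hxe, hxg⟩ := lineGraph_adj_iff_exists.1 heg
  have hmeet : ∀ h : G.edgeSet, ∀ u ∈ (e : Sym2 V), u ∈ (h : Sym2 V) → h ≠ g →
      τ h < τ g := by
    intro h u hue huh hhg
    rcases eq_or_ne e h with rfl | heh
    exacts [hτe, hforce h (lineGraph_adj_iff_exists.2 ⟨heh, u, hue, huh⟩) hhg]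
  obtain ⟨t, het⟩ := Sym2.mem_iff_exists.1 hxe
  have hxt : G.Adj x t := by rw [← mem_edgeSet, ← het]; exact e.2
  have hte : t ∈ (e : Sym2 V) := het ▸ Sym2.mem_mk_right x t
  have htg : t ∉ (g : Sym2 V) := fun htg =>
    hne (Subtype.ext (het.trans ((Sym2.mem_and_mem_iff hxt.ne).1 ⟨hxg, htg⟩).symm))
  refine ⟨x, hxg, fun h hxh hhg => hmeet h x hxe hxh hhg, t, hxt, ?_⟩
  exact vertexTime_lt (fun h hth => hmeet h t hte hth (by rintro rfl; exact htg hth))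
    ((Nat.zero_le _).trans_lt hτe)

variable (τ)

open Classical in
noncomputable def forcingKey (v : V) : ℕ ×ₗ ℕ :=
  toLex (vertexTime τ v, if ∃ g, IsForcingEnd τ g v then 0 else 1)

variable {τ}

lemma IsForcingTime.isForcingEnd_of_forall_forcingKey_le [Finite V] {S : Set G.edgeSet}
    (hτ : IsForcingTime G.lineGraph S τ) {g : G.edgeSet} (hg : g ∉ S) {v : V}
    (hv : v ∈ (g : Sym2 V)) (hmin : ∀ w ∈ (g : Sym2 V), forcingKey τ v ≤ forcingKey τ w) :
    IsForcingEnd τ g v := by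
  obtain ⟨x, hx⟩ := hτ.exists_isForcingEnd hg
  have hkey := hmin x hx.1
  rw [forcingKey, forcingKey, Prod.Lex.toLex_le_toLex, hx.vertexTime_eq,
    if_pos (⟨g, hx⟩ : ∃ g, IsForcingEnd τ g x)] at hkey
  rcases hkey with hlt | ⟨heq, hle⟩
  · exact absurd (le_vertexTime hv) hlt.not_ge
  · split_ifs at hle with hend
    · obtain ⟨g', hg'⟩ := hend
      obtain rfl : g' = g := by
        by_contra hne
        exact (hg'.2.1 g hv (Ne.symm hne)).ne (heq.symm.trans hg'.vertexTime_eq)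
      exact hg'
    · exact absurd hle (by simp)

lemma IsForcingTime.ncard_later_le [Finite V] {S : Set G.edgeSet}
    (hτ : IsForcingTime G.lineGraph S τ) {K : Type*} [LinearOrder K] (κ : V → K)
    (hκ : ∀ v w, forcingKey τ v < forcingKey τ w → κ v < κ w) (v : V) :
    {w | G.Adj v w ∧ κ v < κ w}.ncard ≤
      {w | s(v, w) ∈ ((↑) '' S : Set (Sym2 V)) ∧ κ v < κ w}.ncard +
        {w | G.Adj v w ∧ κ w < κ v}.ncard := by
  let L := {w | ∃ hvw : G.Adj v w, ⟨s(v, w), hvw⟩ ∉ S ∧ κ v < κ w}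
  have hend : ∀ w ∈ L, ∃ hvw : G.Adj v w, IsForcingEnd τ ⟨s(v, w), hvw⟩ v := by
    rintro w ⟨hvw, hS, hlt⟩
    refine ⟨hvw, hτ.isForcingEnd_of_forall_forcingKey_le hS (Sym2.mem_mk_left v w)
      fun u hu => ?_⟩
    rcases Sym2.mem_iff.1 hu with rfl | rfl
    exacts [le_rfl, le_of_not_gt fun h => (hκ _ _ h).asymm hlt]
  have hL : L.ncard ≤ {w | G.Adj v w ∧ κ w < κ v}.ncard := by
    rcases L.eq_empty_or_nonempty with hL | ⟨w, hw⟩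
    · simp [hL]
    obtain ⟨_, hfe⟩ := hend w hw
    obtain ⟨t, hvt, ht⟩ := hfe.2.2
    have hsub : L.Subsingleton := fun a ha b hb => by
      obtain ⟨_, ha⟩ := hend a ha
      obtain ⟨_, hb⟩ := hend b hb
      exact Sym2.congr_right.1 (congrArg Subtype.val (ha.unique hb))
    calc L.ncard ≤ 1 := Set.ncard_le_one_iff_subsingleton.2 hsub
      _ ≤ {w | G.Adj v w ∧ κ w < κ v}.ncard := by
        refine (Set.ncard_pos (Set.toFinite _)).2 ⟨t, hvt, hκ t v ?_⟩
        exact Prod.Lex.toLex_lt_toLex.2 (Or.inl (hfe.vertexTime_eq ▸ ht))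
  calc {w | G.Adj v w ∧ κ v < κ w}.ncard
      ≤ ({w | s(v, w) ∈ ((↑) '' S : Set (Sym2 V)) ∧ κ v < κ w} ∪ L).ncard := by
        refine Set.ncard_le_ncard (fun w ⟨hvw, hlt⟩ => ?_)
        by_cases hS : ⟨s(v, w), hvw⟩ ∈ S
        exacts [Or.inl ⟨⟨_, hS, rfl⟩, hlt⟩, Or.inr ⟨hvw, hS, hlt⟩]
    _ ≤ _ := Set.ncard_union_le _ _
    _ ≤ _ := Nat.add_le_add_left hL _

end LineGraph

theorem brushNumber_le_zfNumber_lineGraph_general {V : Type*} [Fintype V] (G : SimpleGraph V) :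
    brushNumber G ≤ zfNumber G.lineGraph := by
  obtain ⟨S, hS, hcard⟩ : zfNumber G.lineGraph ∈
      {n | ∃ S : Set G.edgeSet, IsZeroForcingSet G.lineGraph S ∧ S.ncard = n} :=
    Nat.sInf_mem ⟨_, Set.univ, fun _ => ZFClosure.init trivial, rfl⟩
  obtain ⟨τ, hτ⟩ := hS.exists_isForcingTime
  let κ : V → (ℕ ×ₗ ℕ) ×ₗ Fin (Fintype.card V) :=
    fun v => toLex (forcingKey τ v, Fintype.equivFin V v)
  have hκ : ∀ v w, forcingKey τ v < forcingKey τ w → κ v < κ w :=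
    fun v w h => Prod.Lex.toLex_lt_toLex.2 (Or.inl h)
  have hκinj : Function.Injective κ := fun v w h =>
    (Fintype.equivFin V).injective (congrArg (fun p => (ofLex p).2) h)
  let ω v := {w | s(v, w) ∈ ((↑) '' S : Set (Sym2 V)) ∧ κ v < κ w}.ncard
  have hclean : Cleans G false ω :=
    cleans_of_ncard_later_le false κ hκinj (hτ.ncard_later_le κ hκ)
  calc brushNumber G ≤ ∑ᶠ v, ω v := Nat.sInf_le ⟨ω, hclean, rfl⟩
    _ = ∑ v, ω v := finsum_eq_sum_of_fintype ω
    _ ≤ ((↑) '' S : Set (Sym2 V)).ncard := sum_ncard_mem_lt_le κ _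
    _ = zfNumber G.lineGraph := by rw [Set.ncard_image_of_injective _ Subtype.val_injective, hcard]

theorem brushNumber_le_zfNumber_lineGraph {V : Type*} [Fintype V] (G : SimpleGraph V)
    (hiso : ∀ v : V, ∃ w, G.Adj v w) :
    brushNumber G ≤ zfNumber G.lineGraph :=
  brushNumber_le_zfNumber_lineGraph_general G

end Paper
end

section
/- For any graph G with no isolated vertices, Z(G) ≤ Z(L(G)), i.e., the zero-forcing number of G is at most the zero-forcing number of its line graph. -/
/-!
Let `B` be a zero forcing set of `L(G)` and fix a chronological list of its forces; a vertex is
saturated once all its edges are black. Orient every edge of `B` and let `S` be the set of heads,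
so that `|S| ≤ |B|`. Edges point to the endpoint that is saturated later; between initially
saturated vertices they point away from a chosen root of each component (measured by the distance
to it); and an initially saturated vertex without saturated neighbours is the head of the edge from
one chosen neighbour, which it then forces in `G`.

Then `S` forces the closed neighbourhood of every initially saturated vertex, and each force
`uv → vw` of `L(G)` is mirrored by the force `v → w` of `G`: a neighbour `x ≠ w` of `v` is black
because either `vx ∉ B` (and was forced earlier), or `v` or `x` was saturated before, or `x` is
saturated later than `v` and hence is the head of `vx`.
-/

open scoped BigOperators

namespace Paper

variable {V : Type*}

section Forcing

variable {W : Type*} {H : SimpleGraph W} {B T T' : Set W}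

def IsForcingStep (H : SimpleGraph W) (T T' : Set W) : Prop :=
  ∃ v w, v ∈ T ∧ w ∉ T ∧ H.Adj v w ∧ (∀ u, H.Adj v u → u ≠ w → u ∈ T) ∧ T' = insert w T

lemma IsForcingStep.subset (h : IsForcingStep H T T') : T ⊆ T' := by
  obtain ⟨-, w, -, -, -, -, rfl⟩ := h
  exact Set.subset_insert w T

lemma IsForcingStep.ne (h : IsForcingStep H T T') : T' ≠ T := by
  obtain ⟨-, w, -, hw, -, -, rfl⟩ := h
  exact fun h => hw (h ▸ Set.mem_insert w T)

lemma ZFClosure.mem_or_exists_isForcingStep {S : Set W} (hST : S ⊆ T) {x : W}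
    (hx : ZFClosure H S x) : x ∈ T ∨ ∃ T', IsForcingStep H T T' := by
  induction hx with
  | init h => exact .inl (hST h)
  | @force v w _ hvw _ ihv ihu =>
    refine ihv.elim (fun hv => ?_) .inr
    by_cases hw : w ∈ T
    · exact .inl hw
    by_cases hrest : ∀ u, H.Adj v u → u ≠ w → u ∈ T
    · exact .inr ⟨_, v, w, hv, hw, hvw, hrest, rfl⟩
    push Not at hrest
    obtain ⟨u, hvu, huw, hu⟩ := hrest
    exact .inr ((ihu u hvu huw).resolve_left hu)

structure ForcingChronology (H : SimpleGraph W) (B : Set W) where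
  black : ℕ → Set W
  black_zero : black 0 = B
  black_succ (t : ℕ) : black (t + 1) = black t ∨ IsForcingStep H (black t) (black (t + 1))
  exists_black_eq_univ : ∃ m, black m = Set.univ

lemma ForcingChronology.monotone_black (C : ForcingChronology H B) : Monotone C.black :=
  monotone_nat_of_le_succ fun t => (C.black_succ t).elim (fun h => h.ge) IsForcingStep.subset

lemma IsZeroForcingSet.nonempty_forcingChronology [Finite W] (hB : IsZeroForcingSet H B) :
    Nonempty (ForcingChronology H B) := by
  classical
  let force : Set W → Set W := fun T => if h : ∃ T', IsForcingStep H T T' then h.choose else T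
  have force_spec (T : Set W) : force T = T ∧ (¬ ∃ T', IsForcingStep H T T') ∨
      IsForcingStep H T (force T) := by
    by_cases h : ∃ T', IsForcingStep H T T'
    · exact .inr (by simpa only [force, dif_pos h] using h.choose_spec)
    · exact .inl ⟨by simp only [force, dif_neg h], h⟩
  have hmono : Monotone fun t => force^[t] B := monotone_nat_of_le_succ fun t => by
    rw [Function.iterate_succ_apply']
    exact (force_spec _).elim (fun h => h.1.ge) IsForcingStep.subset
  obtain ⟨n, hn⟩ := WellFoundedGT.monotone_chain_condition ⟨_, hmono⟩
  have hfix : force (force^[n] B) = force^[n] B := by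
    simpa only [OrderHom.coe_mk, Function.iterate_succ_apply'] using (hn (n + 1) n.le_succ).symm
  refine ⟨⟨fun t => force^[t] B, rfl, fun t => ?_, n, ?_⟩⟩
  · simpa only [Function.iterate_succ_apply'] using
      (force_spec (force^[t] B)).imp_left And.left
  · refine Set.eq_univ_of_forall fun x => ((hB x).mem_or_exists_isForcingStep
      (hmono (Nat.zero_le n))).resolve_right fun hstep => ?_
    exact (force_spec _).elim (fun h => h.2 hstep) fun h => h.ne hfix

end Forcing

section Roots

variable {W : Type*} (H : SimpleGraph W)

noncomputable def componentRoot (v : W) : W := (H.connectedComponentMk v).out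

noncomputable def rootDist (v : W) : ℕ := H.dist v (componentRoot H v)

variable {H}

lemma componentRoot_eq_of_adj {v w : W} (h : H.Adj v w) :
    componentRoot H v = componentRoot H w := by
  rw [componentRoot, componentRoot, SimpleGraph.ConnectedComponent.connectedComponentMk_eq_of_adj h]

lemma exists_adj_rootDist_lt {v : W} (hv : componentRoot H v ≠ v) :
    ∃ p, H.Adj v p ∧ rootDist H p < rootDist H v := by
  have hreach : H.Reachable v (componentRoot H v) :=
    SimpleGraph.ConnectedComponent.exact (H.connectedComponentMk v).out_eq.symm
  obtain ⟨q, hq⟩ := hreach.exists_walk_length_eq_dist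
  obtain ⟨p, hvp, q, rfl⟩ := SimpleGraph.Walk.exists_eq_cons_of_ne (Ne.symm hv) q
  refine ⟨p, hvp, ?_⟩
  have := H.dist_le q
  rw [rootDist, rootDist, ← componentRoot_eq_of_adj hvp, ← hq, SimpleGraph.Walk.length_cons]
  omega

end Roots

section Heads

variable {α : Type*}

def headSet (r : α → α → Prop) (B : Set (Sym2 α)) : Set α := {v | ∃ u, s(u, v) ∈ B ∧ r u v}

lemma ncard_headSet_le {r : α → α → Prop} (hr : ∀ a b, r a b → ¬ r b a) {B : Set (Sym2 α)}
    (hB : B.Finite) : (headSet r B).ncard ≤ B.ncard := by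
  have : ∀ v, ∃ u, v ∈ headSet r B → s(u, v) ∈ B ∧ r u v := fun v =>
    (em (v ∈ headSet r B)).elim (fun ⟨u, hu⟩ => ⟨u, fun _ => hu⟩) fun hv => ⟨v, hv.elim⟩
  choose tail htail using this
  refine Set.ncard_le_ncard_of_injOn (fun v => s(tail v, v)) (fun v hv => (htail v hv).1)
    (fun v hv v' hv' heq => ?_) hB
  rcases Sym2.eq_iff.1 heq with ⟨-, h⟩ | ⟨h, h'⟩
  · exact h
  · exact absurd (h' ▸ (htail v' hv').2) (hr _ _ (h ▸ (htail v hv).2))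

end Heads

section LineGraph

variable {G : SimpleGraph V}

def Saturated (T : Set G.edgeSet) (v : V) : Prop := ∀ e : G.edgeSet, v ∈ (e : Sym2 V) → e ∈ T

lemma Saturated.mono {T T' : Set G.edgeSet} (h : T ⊆ T') {v : V} (hv : Saturated T v) :
    Saturated T' v :=
  fun e he => h (hv e he)

lemma Saturated.of_insert {T : Set G.edgeSet} {e : G.edgeSet} {v : V}
    (hv : Saturated (insert e T) v) (he : v ∉ (e : Sym2 V)) : Saturated T v :=
  fun f hf => (hv f hf).resolve_left (by rintro rfl; exact he hf)

lemma Saturated.mk_mem_image {T : Set G.edgeSet} {u v : V} (hv : Saturated T v)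
    (h : G.Adj u v) : s(u, v) ∈ Subtype.val '' T :=
  ⟨⟨s(u, v), h⟩, hv _ (Sym2.mem_mk_right u v), rfl⟩

lemma IsForcingStep.exists_of_lineGraph {T T' : Set G.edgeSet}
    (h : IsForcingStep G.lineGraph T T') :
    ∃ (e : G.edgeSet) (u s w : V), e ∉ T ∧ T' = insert e T ∧ (e : Sym2 V) = s(s, w) ∧
      G.Adj u s ∧ Saturated T u ∧ ∀ f : G.edgeSet, s ∈ (f : Sym2 V) → f ≠ e → f ∈ T := by
  obtain ⟨d, e, hd, he, hde, hrest, rfl⟩ := h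
  obtain ⟨hne, s, hsd, hse⟩ := SimpleGraph.lineGraph_adj_iff_exists.1 hde
  obtain ⟨u, hdu⟩ := Sym2.mem_iff_exists.1 hsd
  obtain ⟨w, hew⟩ := Sym2.mem_iff_exists.1 hse
  have hsu : G.Adj s u := by rw [← SimpleGraph.mem_edgeSet, ← hdu]; exact d.prop
  have hblack (f : G.edgeSet) (hfe : f ≠ e) (x : V) (hxd : x ∈ (d : Sym2 V))
      (hxf : x ∈ (f : Sym2 V)) : f ∈ T := by
    by_cases hfd : f = d
    · exact hfd ▸ hd
    · exact hrest f (SimpleGraph.lineGraph_adj_iff_exists.2 ⟨Ne.symm hfd, x, hxd, hxf⟩) hfe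
  have hue : u ∉ (e : Sym2 V) := by
    rw [hew, Sym2.mem_iff]
    rintro (rfl | rfl)
    · exact hsu.ne rfl
    · exact hne (Subtype.ext (hdu.trans hew.symm))
  refine ⟨e, u, s, w, he, rfl, hew, hsu.symm, fun f hf => ?_, fun f hf hfe => hblack f hfe s hsd hf⟩
  exact hblack f (by rintro rfl; exact hue hf) u (hdu ▸ Sym2.mem_mk_right s u) hf

variable {B : Set G.edgeSet}

noncomputable def satTime (C : ForcingChronology G.lineGraph B) (v : V) : ℕ :=
  sInf {t | Saturated (C.black t) v}

lemma satTime_le_iff (C : ForcingChronology G.lineGraph B) {v : V} {t : ℕ} :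
    satTime C v ≤ t ↔ Saturated (C.black t) v := by
  obtain ⟨m, hm⟩ := C.exists_black_eq_univ
  have hne : {t | Saturated (C.black t) v}.Nonempty := ⟨m, fun e _ => hm ▸ Set.mem_univ e⟩
  exact ⟨fun h => (Nat.sInf_mem hne).mono (C.monotone_black h), fun h => Nat.sInf_le h⟩

variable (B) in
def saturatedGraph : SimpleGraph V where
  Adj v w := G.Adj v w ∧ Saturated B v ∧ Saturated B w
  symm := ⟨fun _ _ h => ⟨h.1.symm, h.2.2, h.2.1⟩⟩
  loopless := ⟨fun _ h => G.irrefl h.1⟩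

variable (B) in
def IsSaturatedIsolated (v : V) : Prop := Saturated B v ∧ ∀ w, G.Adj v w → ¬ Saturated B w

def Precedes (C : ForcingChronology G.lineGraph B) (partner : V → V) (u v : V) : Prop :=
  (IsSaturatedIsolated B v ∧ u = partner v) ∨
    ¬ (IsSaturatedIsolated B u ∧ v = partner u) ∧
      toLex (satTime C u, rootDist (saturatedGraph B) u) <
        toLex (satTime C v, rootDist (saturatedGraph B) v)

def forcingSet (C : ForcingChronology G.lineGraph B) (partner : V → V) : Set V :=
  headSet (Precedes C partner) (Subtype.val '' B)

variable (C : ForcingChronology G.lineGraph B) {partner : V → V}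

lemma precedes_asymm (hpartner : ∀ v, G.Adj v (partner v)) (u v : V) :
    Precedes C partner u v → ¬ Precedes C partner v u := by
  rintro (⟨hv, rfl⟩ | ⟨hn, hlt⟩) (⟨hu, huv⟩ | ⟨hn', hlt'⟩)
  · exact hv.2 _ (hpartner v) hu.1
  · exact hn' ⟨hv, rfl⟩
  · exact hn ⟨hu, huv⟩
  · exact lt_asymm hlt hlt'

lemma ncard_forcingSet_le [Finite V] (hpartner : ∀ v, G.Adj v (partner v)) :
    (forcingSet C partner).ncard ≤ B.ncard := by
  have := ncard_headSet_le (precedes_asymm C hpartner) (B.toFinite.image Subtype.val)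
  rwa [Set.ncard_image_of_injective _ Subtype.val_injective] at this

lemma satTime_eq_zero_iff {v : V} : satTime C v = 0 ↔ Saturated B v := by
  rw [← Nat.le_zero, satTime_le_iff, C.black_zero]

lemma mem_forcingSet_of_saturated_before {t : ℕ} {y x : V} (hyx : s(y, x) ∈ Subtype.val '' B)
    (hexc : ¬ (IsSaturatedIsolated B y ∧ x = partner y)) (hy : Saturated (C.black t) y)
    (hx : ¬ Saturated (C.black t) x) : x ∈ forcingSet C partner := by
  refine ⟨y, hyx, .inr ⟨hexc, Prod.Lex.toLex_lt_toLex.2 (.inl ?_)⟩⟩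
  exact lt_of_le_of_lt ((satTime_le_iff C).2 hy) (not_le.1 (mt (satTime_le_iff C).1 hx))

lemma mem_forcingSet_of_root_ne {v : V} (hv : Saturated B v)
    (hroot : componentRoot (saturatedGraph B) v ≠ v) : v ∈ forcingSet C partner := by
  obtain ⟨p, ⟨hvp, -, hp⟩, hlt⟩ := exists_adj_rootDist_lt hroot
  refine ⟨p, hv.mk_mem_image hvp.symm, .inr ⟨fun h => h.1.2 v hvp.symm hv,
    Prod.Lex.toLex_lt_toLex.2 (.inr ⟨?_, hlt⟩)⟩⟩
  rw [(satTime_eq_zero_iff C).2 hp, (satTime_eq_zero_iff C).2 hv]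

lemma mem_forcingSet_of_isSaturatedIsolated {v : V} (hv : IsSaturatedIsolated B v)
    (hpartner : G.Adj v (partner v)) : v ∈ forcingSet C partner :=
  ⟨partner v, hv.1.mk_mem_image hpartner.symm, .inl ⟨hv, rfl⟩⟩

lemma mem_forcingSet_of_boundary {v w : V} (hv : Saturated B v) (hvw : G.Adj v w)
    (hw : ¬ Saturated B w) (hexc : ¬ (IsSaturatedIsolated B v ∧ w = partner v)) :
    w ∈ forcingSet C partner :=
  mem_forcingSet_of_saturated_before C (t := 0) (Sym2.eq_swap ▸ hv.mk_mem_image hvw.symm) hexc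
    (by rwa [C.black_zero]) (by rwa [C.black_zero])

lemma zfClosure_of_saturated (hpartner : ∀ v, G.Adj v (partner v)) {v : V} (hv : Saturated B v) :
    ZFClosure G (forcingSet C partner) v := by
  by_cases hroot : componentRoot (saturatedGraph B) v = v
  swap
  · exact .init (mem_forcingSet_of_root_ne C hv hroot)
  by_cases hiso : IsSaturatedIsolated B v
  · exact .init (mem_forcingSet_of_isSaturatedIsolated C hiso (hpartner v))
  obtain ⟨c, hvc, hc⟩ : ∃ c, G.Adj v c ∧ Saturated B c := by
    simpa [IsSaturatedIsolated, hv] using hiso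
  have hroot_c : componentRoot (saturatedGraph B) c = v := by
    rw [← componentRoot_eq_of_adj (H := saturatedGraph B) ⟨hvc, hv, hc⟩, hroot]
  refine .force (.init (mem_forcingSet_of_root_ne C hc (hroot_c ▸ hvc.ne))) hvc.symm
    fun y hcy hyv => .init ?_
  by_cases hy : Saturated B y
  · refine mem_forcingSet_of_root_ne C hy ?_
    rw [← componentRoot_eq_of_adj (H := saturatedGraph B) ⟨hcy, hc, hy⟩, hroot_c]
    exact Ne.symm hyv
  · exact mem_forcingSet_of_boundary C hc hcy hy fun h => h.1.2 v hvc.symm hv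

lemma zfClosure_of_adj_saturated (hpartner : ∀ v, G.Adj v (partner v)) {v w : V}
    (hv : Saturated B v) (hvw : G.Adj v w) : ZFClosure G (forcingSet C partner) w := by
  by_cases hw : Saturated B w
  · exact zfClosure_of_saturated C hpartner hw
  by_cases hexc : IsSaturatedIsolated B v ∧ w = partner v
  · refine .force (zfClosure_of_saturated C hpartner hv) hvw fun u hvu huw => .init ?_
    exact mem_forcingSet_of_boundary C hv hvu (hexc.1.2 u hvu) fun h => huw (h.2.trans hexc.2.symm)
  · exact .init (mem_forcingSet_of_boundary C hv hvw hw hexc)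

variable (B) in
def ForcesEndpoints (S : Set V) (T : Set G.edgeSet) : Prop :=
  ∀ e : G.edgeSet, e ∈ T \ B ∨ (∃ v ∈ (e : Sym2 V), Saturated T v) →
    ∀ x ∈ (e : Sym2 V), ZFClosure G S x

lemma forcesEndpoints_black_zero (hpartner : ∀ v, G.Adj v (partner v)) :
    ForcesEndpoints B (forcingSet C partner) (C.black 0) := by
  rw [C.black_zero]
  rintro e (⟨he, heB⟩ | ⟨v, hve, hv⟩) x hxe
  · exact absurd he heB
  by_cases hxv : x = v
  · exact hxv ▸ zfClosure_of_saturated C hpartner hv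
  · exact zfClosure_of_adj_saturated C hpartner hv
      (G.adj_of_mem_incidenceSet (Ne.symm hxv) ⟨e.prop, hve⟩ ⟨e.prop, hxe⟩)

lemma ForcesEndpoints.zfClosure_of_saturated_insert {t : ℕ}
    (h : ForcesEndpoints B (forcingSet C partner) (C.black t)) {e f : G.edgeSet}
    (hT' : C.black (t + 1) = insert e (C.black t)) {y x : V}
    (hy : Saturated (C.black (t + 1)) y) (hfT : f ∈ C.black t) (hyf : y ∈ (f : Sym2 V))
    (hxf : x ∈ (f : Sym2 V)) (hxe : x ∉ (e : Sym2 V)) : ZFClosure G (forcingSet C partner) x := by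
  by_cases hfB : f ∈ B
  swap
  · exact h f (.inl ⟨hfT, hfB⟩) x hxf
  by_cases hyT : Saturated (C.black t) y
  · exact h f (.inr ⟨y, hyf, hyT⟩) x hxf
  by_cases hxT : Saturated (C.black t) x
  · exact h f (.inr ⟨x, hxf, hxT⟩) x hxf
  have hx : ¬ Saturated (C.black (t + 1)) x := by
    rw [hT']
    exact fun hx => hxT (hx.of_insert hxe)
  have hyx : y ≠ x := by rintro rfl; exact hx hy
  have hBT : B ⊆ C.black t := by simpa only [C.black_zero] using C.monotone_black (Nat.zero_le t)
  exact .init (mem_forcingSet_of_saturated_before C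
    ⟨f, hfB, (Sym2.mem_and_mem_iff hyx).1 ⟨hyf, hxf⟩⟩ (fun hexc => hyT (hexc.1.1.mono hBT)) hy hx)

lemma ForcesEndpoints.black_succ {t : ℕ}
    (h : ForcesEndpoints B (forcingSet C partner) (C.black t)) :
    ForcesEndpoints B (forcingSet C partner) (C.black (t + 1)) := by
  rcases C.black_succ t with heq | hstep
  · rwa [heq]
  obtain ⟨e, u, s, w, -, hT', hesw, hus, hu, hs⟩ := hstep.exists_of_lineGraph
  have hs_sat : Saturated (C.black (t + 1)) s := fun f hf => by
    rw [hT']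
    by_cases hfe : f = e
    · exact .inl hfe
    · exact .inr (hs f hf hfe)
  have hsw : G.Adj s w := by rw [← SimpleGraph.mem_edgeSet, ← hesw]; exact e.prop
  have hs_cl : ZFClosure G (forcingSet C partner) s :=
    h ⟨s(u, s), hus⟩ (.inr ⟨u, Sym2.mem_mk_left u s, hu⟩) s (Sym2.mem_mk_right u s)
  have hw_cl : ZFClosure G (forcingSet C partner) w := by
    refine .force hs_cl hsw fun x hsx hxw => ?_
    have hxe : x ∉ (e : Sym2 V) := by
      rw [hesw, Sym2.mem_iff]
      rintro (rfl | rfl)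
      exacts [hsx.ne rfl, hxw rfl]
    have hfe : (⟨s(s, x), hsx⟩ : G.edgeSet) ≠ e := fun hfe => hxe (hfe ▸ Sym2.mem_mk_right s x)
    exact h.zfClosure_of_saturated_insert C hT' hs_sat (hs _ (Sym2.mem_mk_left s x) hfe)
      (Sym2.mem_mk_left s x) (Sym2.mem_mk_right s x) hxe
  have he_cl (x : V) (hxe : x ∈ (e : Sym2 V)) : ZFClosure G (forcingSet C partner) x := by
    rw [hesw, Sym2.mem_iff] at hxe
    rcases hxe with rfl | rfl
    exacts [hs_cl, hw_cl]
  rintro f hf x hxf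
  by_cases hxe : x ∈ (e : Sym2 V)
  · exact he_cl x hxe
  by_cases hfe : f = e
  · exact absurd (hfe ▸ hxf) hxe
  rw [hT'] at hf
  rcases hf with ⟨hfT, hfB⟩ | ⟨y, hyf, hy⟩
  · exact h f (.inl ⟨hfT.resolve_left hfe, hfB⟩) x hxf
  · exact h.zfClosure_of_saturated_insert C hT' (hT' ▸ hy) ((hy f hyf).resolve_left hfe) hyf hxf hxe

lemma isZeroForcingSet_forcingSet (hpartner : ∀ v, G.Adj v (partner v)) :
    IsZeroForcingSet G (forcingSet C partner) := by
  have hforces (t : ℕ) : ForcesEndpoints B (forcingSet C partner) (C.black t) :=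
    Nat.rec (forcesEndpoints_black_zero C hpartner) (fun _ ih => ih.black_succ C) t
  obtain ⟨m, hm⟩ := C.exists_black_eq_univ
  exact fun v => hforces m ⟨s(v, partner v), hpartner v⟩
    (.inr ⟨v, Sym2.mem_mk_left _ _, fun e _ => hm ▸ Set.mem_univ e⟩) v (Sym2.mem_mk_left _ _)

end LineGraph

theorem exists_isZeroForcingSet_ncard_le [Finite V] {G : SimpleGraph V}
    (hiso : ∀ v : V, ∃ w, G.Adj v w) {B : Set G.edgeSet} (hB : IsZeroForcingSet G.lineGraph B) :
    ∃ S, IsZeroForcingSet G S ∧ S.ncard ≤ B.ncard := by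
  choose partner hpartner using hiso
  obtain ⟨C⟩ := hB.nonempty_forcingChronology
  exact ⟨_, isZeroForcingSet_forcingSet C hpartner, ncard_forcingSet_le C hpartner⟩

theorem zfNumber_le_zfNumber_lineGraph {V : Type*} [Fintype V] (G : SimpleGraph V)
    (hiso : ∀ v : V, ∃ w, G.Adj v w) :
    zfNumber G ≤ zfNumber G.lineGraph := by
  have hne : {n | ∃ S : Set G.edgeSet, IsZeroForcingSet G.lineGraph S ∧ S.ncard = n}.Nonempty :=
    ⟨_, Set.univ, fun e => .init (Set.mem_univ e), rfl⟩
  obtain ⟨B, hB, hcard⟩ := Nat.sInf_mem hne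
  obtain ⟨S, hS, hSB⟩ := exists_isZeroForcingSet_ncard_le hiso hB
  calc zfNumber G ≤ S.ncard := Nat.sInf_le ⟨S, hS, rfl⟩
    _ ≤ B.ncard := hSB
    _ = zfNumber G.lineGraph := hcard

end Paper
end

section
/- For any graph G with no isolated vertices, b(G) ≤ Z(L(G)), where b(G) is the restricted brushing number in which each edge is traversed by exactly one brush. -/
open scoped BigOperators

namespace Paper

variable {V : Type*}

section PartI
open Finset
variable [Fintype V] [DecidableEq V] (G : SimpleGraph V) [DecidableRel G.Adj] (ω : V → ℕ)

/-- dirty edges once `F` has fired -/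
def dirtyF (F : Finset V) : Finset (Sym2 V) :=
  G.edgeFinset.filter (fun e => ∀ x ∈ e, x ∉ F)

/-- the configuration after the vertices of `F` have fired -/
def cfg (F : Finset V) : BrushConfig V :=
  ⟨(F : Set V), (dirtyF G F : Set (Sym2 V)),
    fun v => if v ∈ F then 0 else ω v + (F.filter (G.Adj v)).card⟩

lemma cfg_empty : cfg G ω ∅ = ⟨∅, G.edgeSet, ω⟩ := by
  unfold cfg dirtyF
  simp only [BrushConfig.mk.injEq]
  refine ⟨by simp, by simp, by funext v; simp⟩

lemma card_dirty_at (F : Finset V) (v : V) (hv : v ∉ F) :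
    ((dirtyF G F).filter (fun e => v ∈ e)).card
      = (univ.filter fun w => G.Adj v w ∧ w ∉ F).card := by
  symm
  apply Finset.card_bij (fun w _ => s(v, w))
  · intro w hw
    simp only [mem_filter, mem_univ, true_and] at hw
    refine Finset.mem_filter.mpr ⟨?_, Sym2.mem_mk_left v w⟩
    refine Finset.mem_filter.mpr ⟨SimpleGraph.mem_edgeFinset.mpr hw.1, ?_⟩
    intro x hx
    rcases Sym2.mem_iff.mp hx with rfl | rfl
    · exact hv
    · exact hw.2
  · intro a _ b _ hab
    exact Sym2.congr_right.mp hab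
  · intro e he
    simp only [mem_filter, dirtyF, SimpleGraph.mem_edgeFinset] at he
    obtain ⟨⟨hedge, hnf⟩, hve⟩ := he
    refine ⟨Sym2.Mem.other hve, ?_, Sym2.other_spec hve⟩
    simp only [mem_filter, mem_univ, true_and]
    constructor
    · have h2 := Sym2.other_spec hve
      rw [← h2] at hedge
      exact hedge
    · exact hnf _ (Sym2.other_mem hve)

lemma step_lemma (F : Finset V) (v : V) (hv : v ∉ F)
    (hcount : (univ.filter fun w => G.Adj v w ∧ w ∉ F).card
      ≤ ω v + (F.filter (G.Adj v)).card) :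
    BrushStep G true (cfg G ω F) (cfg G ω (insert v F)) := by
  refine ⟨v, fun _ => 1, ?_, ?_, ?_, ?_, ?_, ?_⟩
  · simpa [cfg] using hv
  · intro e _ _; simp
  · have hset : {e ∈ (cfg G ω F).dirty | v ∈ e}
        = (((dirtyF G F).filter (fun e => v ∈ e) : Finset (Sym2 V)) : Set (Sym2 V)) := by
      ext e; simp [cfg]
    rw [hset, finsum_mem_coe_finset]
    simp only [Finset.sum_const, smul_eq_mul, mul_one]
    rw [card_dirty_at G F v hv]
    simpa [cfg, hv] using hcount
  · simp [cfg]
  · have hde : dirtyF G (insert v F) = (dirtyF G F).filter (fun e => v ∉ e) := by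
      unfold dirtyF
      ext e
      simp only [Finset.mem_filter, Finset.mem_insert]
      constructor
      · rintro ⟨he, hf⟩
        exact ⟨⟨he, fun x hx hxF => (hf x hx) (Or.inr hxF)⟩, fun hve => (hf v hve) (Or.inl rfl)⟩
      · rintro ⟨⟨he, hf⟩, hve⟩
        refine ⟨he, ?_⟩
        rintro x hx (rfl | hxF)
        · exact hve hx
        · exact hf x hx hxF
    show ((dirtyF G (insert v F) : Finset (Sym2 V)) : Set (Sym2 V)) = _
    rw [hde, Finset.coe_filter]
    rfl
  · intro w
    have hmem : (s(v,w) ∈ (cfg G ω F).dirty) ↔ (G.Adj v w ∧ w ∉ F) := by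
      show s(v,w) ∈ ((dirtyF G F : Finset (Sym2 V)) : Set (Sym2 V)) ↔ _
      rw [Finset.mem_coe]
      unfold dirtyF
      rw [Finset.mem_filter, SimpleGraph.mem_edgeFinset, SimpleGraph.mem_edgeSet]
      constructor
      · rintro ⟨ha, hf⟩
        exact ⟨ha, hf w (Sym2.mem_mk_right v w)⟩
      · rintro ⟨ha, hwF⟩
        refine ⟨ha, ?_⟩
        intro x hx
        rcases Sym2.mem_iff.mp hx with rfl | rfl
        · exact hv
        · exact hwF
    have hind : (cfg G ω F).dirty.indicator (fun _ => (1:ℕ)) s(v, w)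
        = if (G.Adj v w ∧ w ∉ F) then 1 else 0 := by
      by_cases hc : G.Adj v w ∧ w ∉ F
      · rw [Set.indicator_of_mem (hmem.mpr hc), if_pos hc]
      · rw [Set.indicator_of_notMem (fun h => hc (hmem.mp h)), if_neg hc]
    rw [hind]
    by_cases hwv : w = v
    · subst hwv
      simp [cfg, (G.irrefl : ¬ G.Adj w w)]
    · by_cases hwF : w ∈ F
      · simp [cfg, hwF, hwv, Finset.mem_insert]
      · have hwin : w ∉ insert v F := by simp [hwv, hwF]
        simp only [cfg, if_neg hwin, if_neg hwF, if_neg hwv]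
        by_cases hadj : G.Adj v w
        · have : (insert v F).filter (G.Adj w) = insert v (F.filter (G.Adj w)) := by
            rw [Finset.filter_insert, if_pos (G.adj_symm hadj)]
          rw [this, Finset.card_insert_of_notMem (by simp [hv]), if_pos ⟨hadj, hwF⟩]
          ring
        · have : (insert v F).filter (G.Adj w) = F.filter (G.Adj w) := by
            rw [Finset.filter_insert, if_neg (fun h => hadj (G.adj_symm h))]
          rw [this, if_neg (by tauto)]
          omega

lemma reach_univ (κ : V → ℕ) (hκ : Function.Injective κ)
    (h : ∀ v, (univ.filter fun w => G.Adj v w ∧ κ v < κ w).card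
      ≤ ω v + (univ.filter fun w => G.Adj v w ∧ κ w < κ v).card) :
    ∀ (n : ℕ) (F : Finset V), Fᶜ.card = n →
      (∀ v ∈ F, ∀ w, w ∉ F → κ v < κ w) →
      Relation.ReflTransGen (BrushStep G true) (cfg G ω F) (cfg G ω univ) := by
  intro n
  induction n with
  | zero =>
    intro F hF _
    have h0 : Fᶜ = ∅ := Finset.card_eq_zero.mp hF
    have : F = univ := by rw [← compl_compl F, h0, Finset.compl_empty]
    rw [this]
  | succ n ih =>
    intro F hF hlow
    have hne : Fᶜ.Nonempty := by
      rw [← Finset.card_pos, hF]; omega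
    obtain ⟨v, hvmem, hvmin⟩ := Finset.exists_min_image Fᶜ κ hne
    have hvF : v ∉ F := Finset.mem_compl.mp hvmem
    have hmin : ∀ w, w ∉ F → κ v ≤ κ w := fun w hw => hvmin w (Finset.mem_compl.mpr hw)
    have hstep := step_lemma G ω F v hvF ?_
    · refine Relation.ReflTransGen.head hstep (ih (insert v F) ?_ ?_)
      · rw [Finset.compl_insert, Finset.card_erase_of_mem hvmem, hF]
        omega
      · intro x hx w hw
        have hwF : w ∉ F := fun h => hw (Finset.mem_insert_of_mem h)
        have hwv : w ≠ v := fun h => hw (h ▸ Finset.mem_insert_self v F)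
        rcases Finset.mem_insert.mp hx with rfl | hx
        · exact lt_of_le_of_ne (hmin w hwF) (fun h => hwv (hκ h.symm))
        · exact hlow x hx w hwF
    · calc (univ.filter fun w => G.Adj v w ∧ w ∉ F).card
          ≤ (univ.filter fun w => G.Adj v w ∧ κ v < κ w).card := by
            apply Finset.card_le_card
            intro w hw
            simp only [mem_filter, mem_univ, true_and] at hw ⊢
            refine ⟨hw.1, lt_of_le_of_ne (hmin w hw.2) (fun h => (G.ne_of_adj hw.1) (hκ h))⟩
        _ ≤ ω v + (univ.filter fun w => G.Adj v w ∧ κ w < κ v).card := h v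
        _ ≤ ω v + (F.filter (G.Adj v)).card := by
            gcongr
            intro w hw
            simp only [mem_filter, mem_univ, true_and] at hw
            refine Finset.mem_filter.mpr ⟨?_, hw.1⟩
            by_contra hwF
            exact absurd (hmin w hwF) (not_le.mpr hw.2)

lemma cleans_of_key (κ : V → ℕ) (hκ : Function.Injective κ)
    (h : ∀ v, (univ.filter fun w => G.Adj v w ∧ κ v < κ w).card
      ≤ ω v + (univ.filter fun w => G.Adj v w ∧ κ w < κ v).card) :
    Cleans G true ω := by
  refine ⟨cfg G ω univ, ?_, by simp [cfg]⟩
  rw [← cfg_empty G ω]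
  exact reach_univ G ω κ hκ h _ ∅ rfl (by simp)

end PartI

section PartII
open Finset
variable [Fintype V] [DecidableEq V] (G : SimpleGraph V) [DecidableRel G.Adj]
  [Fintype G.edgeSet]

lemma sym2_exists_mem (s : Sym2 V) : ∃ x, x ∈ s :=
  Sym2.ind (fun a b => ⟨a, Sym2.mem_mk_left a b⟩) s

/-- iterated zero-forcing steps on the line graph -/
def Bset (S : Set G.edgeSet) : ℕ → Set G.edgeSet
  | 0 => S
  | n+1 => Bset S n ∪ {w | ∃ v ∈ Bset S n, (G.lineGraph).Adj v w ∧
      ∀ u, (G.lineGraph).Adj v u → u ≠ w → u ∈ Bset S n}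

lemma Bset_mono (S : Set G.edgeSet) : Monotone (Bset G S) :=
  monotone_nat_of_le_succ (fun _ => Set.subset_union_left)

lemma exists_uniform (S : Set G.edgeSet) (T : Finset G.edgeSet)
    (h : ∀ u ∈ T, ∃ n, u ∈ Bset G S n) : ∃ N, ∀ u ∈ T, u ∈ Bset G S N := by
  classical
  induction T using Finset.induction_on with
  | empty => exact ⟨0, by simp⟩
  | @insert a s ha ih =>
    obtain ⟨N1, hN1⟩ := ih (fun u hu => h u (mem_insert_of_mem hu))
    obtain ⟨n1, hn1⟩ := h a (mem_insert_self a s)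
    refine ⟨max N1 n1, ?_⟩
    intro u hu
    rcases mem_insert.mp hu with rfl | hu
    · exact Bset_mono G S (le_max_right _ _) hn1
    · exact Bset_mono G S (le_max_left _ _) (hN1 u hu)

lemma zf_exists_mem (S : Set G.edgeSet) {e : G.edgeSet}
    (h : ZFClosure (G.lineGraph) S e) : ∃ n, e ∈ Bset G S n := by
  classical
  induction h with
  | init h => exact ⟨0, h⟩
  | @force v w _ hadj _ ihv ihu =>
    obtain ⟨N, hN⟩ := exists_uniform G S
      (univ.filter (fun u => (G.lineGraph).Adj v u ∧ u ≠ w))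
      (fun u hu => by
        simp only [mem_filter, mem_univ, true_and] at hu
        exact ihu u hu.1 hu.2)
    obtain ⟨n, hn⟩ := ihv
    refine ⟨max N n + 1, Or.inr ⟨v, Bset_mono G S (le_max_right _ _) hn, hadj, ?_⟩⟩
    intro u h1 h2
    exact Bset_mono G S (le_max_left _ _)
      (hN u (by simp only [mem_filter, mem_univ, true_and]; exact ⟨h1, h2⟩))

open Classical in
/-- the step at which an edge becomes black -/
noncomputable def rankE (S : Set G.edgeSet) (e : G.edgeSet) : ℕ :=
  if h : ∃ n, e ∈ Bset G S n then Nat.find h else 0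

lemma rank_mem {S : Set G.edgeSet} {e : G.edgeSet} (hex : ∃ n, e ∈ Bset G S n) :
    e ∈ Bset G S (rankE G S e) := by
  classical
  unfold rankE; rw [dif_pos hex]; exact Nat.find_spec hex

lemma rank_le {S : Set G.edgeSet} {e : G.edgeSet} {n : ℕ} (h : e ∈ Bset G S n) :
    rankE G S e ≤ n := by
  classical
  unfold rankE; rw [dif_pos ⟨n, h⟩]; exact Nat.find_min' _ h

lemma not_mem_of_lt_rank {S : Set G.edgeSet} {e : G.edgeSet} {n : ℕ}
    (hex : ∃ n, e ∈ Bset G S n) (h : n < rankE G S e) : e ∉ Bset G S n := by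
  classical
  unfold rankE at h; rw [dif_pos hex] at h; exact Nat.find_min hex h

lemma mem_S_of_rank_zero {S : Set G.edgeSet} {e : G.edgeSet}
    (hex : ∃ n, e ∈ Bset G S n) (h : rankE G S e = 0) : e ∈ S := by
  have := rank_mem G hex; rwa [h] at this

/-- forcing data predicate -/
def Pfd (S : Set G.edgeSet) (d e : G.edgeSet) : Prop :=
  d ∈ Bset G S (rankE G S e - 1) ∧ (G.lineGraph).Adj d e ∧
    ∀ u, (G.lineGraph).Adj d u → u ≠ e → u ∈ Bset G S (rankE G S e - 1)

lemma exists_fd {S : Set G.edgeSet} {e : G.edgeSet}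
    (hex : ∃ n, e ∈ Bset G S n) (hr : 1 ≤ rankE G S e) : ∃ d, Pfd G S d e := by
  obtain ⟨n, hn⟩ : ∃ n, rankE G S e = n + 1 := ⟨rankE G S e - 1, by omega⟩
  have hmem : e ∈ Bset G S (n + 1) := by rw [← hn]; exact rank_mem G hex
  have hnot : e ∉ Bset G S n := not_mem_of_lt_rank G hex (by omega)
  simp only [Bset, Set.mem_union, Set.mem_setOf_eq] at hmem
  rcases hmem with h | ⟨d, hd, hadj, hall⟩
  · exact absurd h hnot
  · refine ⟨d, ?_, hadj, ?_⟩
    · rw [hn]; simpa using hd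
    · rw [hn]; simpa using hall

open Classical in
noncomputable def fd (S : Set G.edgeSet) (e : G.edgeSet) : G.edgeSet :=
  if h : ∃ d, Pfd G S d e then h.choose else e

lemma fd_spec {S : Set G.edgeSet} {e : G.edgeSet} (h : ∃ d, Pfd G S d e) :
    Pfd G S (fd G S e) e := by
  classical
  unfold fd; rw [dif_pos h]; exact h.choose_spec

lemma shared_exists (S : Set G.edgeSet) (e : G.edgeSet) :
    ∃ x : V, x ∈ (fd G S e : Sym2 V) ∧ x ∈ (e : Sym2 V) := by
  unfold fd
  split
  · next h => exact (SimpleGraph.lineGraph_adj_iff_exists.mp h.choose_spec.2.1).2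
  · obtain ⟨x, hx⟩ := sym2_exists_mem (e : Sym2 V)
    exact ⟨x, hx, hx⟩

/-- the vertex through which `e` was forced -/
noncomputable def uvx (S : Set G.edgeSet) (e : G.edgeSet) : V :=
  (shared_exists G S e).choose

lemma uvx_mem (S : Set G.edgeSet) (e : G.edgeSet) :
    uvx G S e ∈ (fd G S e : Sym2 V) ∧ uvx G S e ∈ (e : Sym2 V) :=
  (shared_exists G S e).choose_spec

lemma F1 {S : Set G.edgeSet} {e : G.edgeSet}
    (hex : ∃ n, e ∈ Bset G S n) (hr : 1 ≤ rankE G S e) :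
    ∀ g : G.edgeSet, uvx G S e ∈ (g : Sym2 V) → g ≠ e → rankE G S g < rankE G S e := by
  intro g hg hge
  have hP := fd_spec G (exists_fd G hex hr)
  by_cases hgd : g = fd G S e
  · have := rank_le G (hgd ▸ hP.1)
    omega
  · have hadj : (G.lineGraph).Adj (fd G S e) g :=
      SimpleGraph.lineGraph_adj_iff_exists.mpr
        ⟨fun h => hgd h.symm, uvx G S e, (uvx_mem G S e).1, hg⟩
    have := rank_le G (hP.2.2 g hadj hge)
    omega

lemma F2 {S : Set G.edgeSet} {e : G.edgeSet}
    (hex : ∃ n, e ∈ Bset G S n) (hr : 1 ≤ rankE G S e) :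
    ∃ z : V, G.Adj (uvx G S e) z ∧
      ∀ g : G.edgeSet, z ∈ (g : Sym2 V) → rankE G S g < rankE G S e := by
  have hP := fd_spec G (exists_fd G hex hr)
  have hd_ne_e : fd G S e ≠ e := (SimpleGraph.lineGraph_adj_iff_exists.mp hP.2.1).1
  have hu := (uvx_mem G S e).1
  have hdiag : ¬ (fd G S e : Sym2 V).IsDiag :=
    SimpleGraph.not_isDiag_of_mem_edgeSet G (fd G S e).2
  set z := Sym2.Mem.other hu with hz
  have hzne : z ≠ uvx G S e := Sym2.other_ne hdiag hu
  have hspec : s(uvx G S e, z) = (fd G S e : Sym2 V) := Sym2.other_spec hu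
  have hadjz : G.Adj (uvx G S e) z := by
    rw [← SimpleGraph.mem_edgeSet, hspec]; exact (fd G S e).2
  have hznotine : z ∉ (e : Sym2 V) := by
    intro hze
    have heq : (e : Sym2 V) = s(uvx G S e, z) :=
      (Sym2.mem_and_mem_iff (fun h => hzne h.symm)).mp ⟨(uvx_mem G S e).2, hze⟩
    exact hd_ne_e (Subtype.ext (hspec.symm.trans heq.symm))
  refine ⟨z, hadjz, ?_⟩
  intro g hgz
  have hge : g ≠ e := fun h => hznotine (h ▸ hgz)
  by_cases hgd : g = fd G S e
  · have := rank_le G (hgd ▸ hP.1)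
    omega
  · have hadj : (G.lineGraph).Adj (fd G S e) g :=
      SimpleGraph.lineGraph_adj_iff_exists.mpr
        ⟨fun h => hgd h.symm, z, hspec ▸ Sym2.mem_mk_right _ _, hgz⟩
    have := rank_le G (hP.2.2 g hadj hge)
    omega

/-- last time an edge at `v` becomes black -/
noncomputable def lvx (S : Set G.edgeSet) (v : V) : ℕ :=
  (univ.filter (fun e : G.edgeSet => v ∈ (e : Sym2 V))).sup (rankE G S)

open Classical in
/-- tie-breaker: `0` when `v` is the forcing vertex of its last edge -/
noncomputable def tie (S : Set G.edgeSet) (v : V) : ℕ :=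
  if ∃ e : G.edgeSet, v ∈ (e : Sym2 V) ∧ 1 ≤ rankE G S e ∧
      rankE G S e = lvx G S v ∧ uvx G S e = v then 0 else 1

/-- the firing key of a vertex -/
noncomputable def key (S : Set G.edgeSet) (v : V) : ℕ :=
  (Fintype.equivFin V v : ℕ) + (Fintype.card V) * (tie G S v + 2 * lvx G S v)

lemma tie_le_one (S : Set G.edgeSet) (v : V) : tie G S v ≤ 1 := by
  unfold tie; split <;> omega

lemma key_inj (S : Set G.edgeSet) : Function.Injective (key G S) := by
  intro v w h
  have hv : (Fintype.equivFin V v : ℕ) < Fintype.card V := (Fintype.equivFin V v).is_lt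
  have hw : (Fintype.equivFin V w : ℕ) < Fintype.card V := (Fintype.equivFin V w).is_lt
  have h2 : (key G S v) % Fintype.card V = (key G S w) % Fintype.card V := by rw [h]
  unfold key at h2
  rw [Nat.add_mul_mod_self_left, Nat.add_mul_mod_self_left,
    Nat.mod_eq_of_lt hv, Nat.mod_eq_of_lt hw] at h2
  exact (Fintype.equivFin V).injective (Fin.val_injective h2)

lemma key_lt_of_lvx_lt {S : Set G.edgeSet} {v w : V} (h : lvx G S v < lvx G S w) :
    key G S v < key G S w := by
  have hv : (Fintype.equivFin V v : ℕ) < Fintype.card V := (Fintype.equivFin V v).is_lt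
  have htv := tie_le_one G S v
  unfold key
  have h1 : (Fintype.equivFin V v : ℕ) + Fintype.card V * (tie G S v + 2 * lvx G S v)
      < Fintype.card V * (2 + 2 * lvx G S v) := by nlinarith
  have h2 : Fintype.card V * (2 + 2 * lvx G S v)
      ≤ Fintype.card V * (tie G S w + 2 * lvx G S w) := by
    apply Nat.mul_le_mul_left; omega
  omega

lemma key_lt_of_tie_lt {S : Set G.edgeSet} {v w : V} (hl : lvx G S v = lvx G S w)
    (h : tie G S v < tie G S w) : key G S v < key G S w := by
  have hv : (Fintype.equivFin V v : ℕ) < Fintype.card V := (Fintype.equivFin V v).is_lt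
  unfold key
  have h1 : (Fintype.equivFin V v : ℕ) + Fintype.card V * (tie G S v + 2 * lvx G S v)
      < Fintype.card V * (1 + tie G S v + 2 * lvx G S v) := by nlinarith
  have h2 : Fintype.card V * (1 + tie G S v + 2 * lvx G S v)
      ≤ Fintype.card V * (tie G S w + 2 * lvx G S w) := by
    apply Nat.mul_le_mul_left; omega
  omega


open Classical in
/-- brush placement: one brush on the earlier endpoint of each edge of `S` -/
noncomputable def omegaS (S : Set G.edgeSet) (v : V) : ℕ :=
  (univ.filter fun w => G.Adj v w ∧ key G S v < key G S w ∧
    s(v, w) ∈ (Subtype.val '' S)).card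

lemma main_count {S : Set G.edgeSet} (hS : IsZeroForcingSet G.lineGraph S) (v : V) :
    (univ.filter fun w => G.Adj v w ∧ key G S v < key G S w).card
      ≤ omegaS G S v + (univ.filter fun w => G.Adj v w ∧ key G S w < key G S v).card := by
  classical
  have hex : ∀ e : G.edgeSet, ∃ n, e ∈ Bset G S n := fun e => zf_exists_mem G S (hS e)
  set A := univ.filter (fun w => G.Adj v w ∧ key G S v < key G S w) with hA
  set AN := A.filter (fun w => s(v, w) ∉ (Subtype.val '' S)) with hANdef
  have hsum : (A.filter (fun w => s(v, w) ∈ (Subtype.val '' S))).card + AN.card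
      = A.card := by
    rw [hANdef]
    convert Finset.card_filter_add_card_filter_not
      (s := A) (p := fun w => s(v, w) ∈ (Subtype.val '' S)) using 3
  have hpos : (A.filter (fun w => s(v, w) ∈ (Subtype.val '' S))).card = omegaS G S v := by
    unfold omegaS
    congr 1
    rw [hA, Finset.filter_filter]
    ext w
    simp only [Finset.mem_filter, Finset.mem_univ, true_and]
    tauto
  -- the per-element facts
  have hW : ∀ w ∈ AN, ∀ (h : G.Adj v w),
      1 ≤ rankE G S ⟨s(v, w), (G.mem_edgeSet).mpr h⟩ ∧
      uvx G S ⟨s(v, w), (G.mem_edgeSet).mpr h⟩ = v := by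
    intro w hw hadj
    rw [hANdef, Finset.mem_filter, hA, Finset.mem_filter] at hw
    obtain ⟨⟨-, -, hkey⟩, hnmem⟩ := hw
    set ew : G.edgeSet := ⟨s(v, w), (G.mem_edgeSet).mpr hadj⟩ with hew
    have hvw : v ≠ w := G.ne_of_adj hadj
    have hnotS : ew ∉ S := fun h => hnmem ⟨ew, h, rfl⟩
    have hr : 1 ≤ rankE G S ew := by
      by_contra hcon
      exact hnotS (mem_S_of_rank_zero G (hex ew) (by omega))
    refine ⟨hr, ?_⟩
    have hvmem : v ∈ (ew : Sym2 V) := Sym2.mem_mk_left v w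
    have hwmem : w ∈ (ew : Sym2 V) := Sym2.mem_mk_right v w
    rcases Sym2.mem_iff.mp (uvx_mem G S ew).2 with h | h
    · exact h
    · -- uvx ew = w : derive a contradiction
      exfalso
      have hlw : lvx G S w = rankE G S ew := by
        apply le_antisymm
        · apply Finset.sup_le
          intro g hg
          rw [Finset.mem_filter] at hg
          by_cases hge : g = ew
          · rw [hge]
          · exact le_of_lt (F1 G (hex ew) hr g (h ▸ hg.2) hge)
        · exact Finset.le_sup (Finset.mem_filter.mpr ⟨Finset.mem_univ _, hwmem⟩)
      have htw : tie G S w = 0 := by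
        unfold tie
        rw [if_pos ⟨ew, hwmem, hr, hlw.symm, h⟩]
      have hlv_ge : rankE G S ew ≤ lvx G S v :=
        Finset.le_sup (Finset.mem_filter.mpr ⟨Finset.mem_univ _, hvmem⟩)
      have hlvv : lvx G S v = lvx G S w := by
        have h1 : ¬ lvx G S w < lvx G S v :=
          fun hlt => lt_asymm hkey (key_lt_of_lvx_lt G hlt)
        omega
      have htv : tie G S v = 0 := by
        have h2 : ¬ tie G S w < tie G S v :=
          fun hlt => lt_asymm hkey (key_lt_of_tie_lt G hlvv.symm hlt)
        omega
      have hc : ∃ e1 : G.edgeSet, v ∈ (e1 : Sym2 V) ∧ 1 ≤ rankE G S e1 ∧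
          rankE G S e1 = lvx G S v ∧ uvx G S e1 = v := by
        by_contra hcon
        unfold tie at htv
        rw [if_neg hcon] at htv
        omega
      obtain ⟨e1, he1v, he1r, he1l, he1u⟩ := hc
      have he1ne : ew ≠ e1 := by
        intro heq
        have : uvx G S ew = uvx G S e1 := by rw [heq]
        rw [h, he1u] at this
        exact hvw this.symm
      have := F1 G (hex e1) he1r ew (by rw [he1u]; exact hvmem) (Ne.symm he1ne |>.symm)
      omega
  -- at most one non-initial edge, and it provides an earlier neighbour
  have hcard1 : AN.card ≤ 1 := by
    rw [Finset.card_le_one]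
    intro a ha b hb
    by_contra hab
    have hadja : G.Adj v a := by
      rw [hANdef, Finset.mem_filter, hA, Finset.mem_filter] at ha; exact ha.1.2.1
    have hadjb : G.Adj v b := by
      rw [hANdef, Finset.mem_filter, hA, Finset.mem_filter] at hb; exact hb.1.2.1
    obtain ⟨hra, hua⟩ := hW a ha hadja
    obtain ⟨hrb, hub⟩ := hW b hb hadjb
    have hne : (⟨s(v, b), (G.mem_edgeSet).mpr hadjb⟩ : G.edgeSet)
        ≠ ⟨s(v, a), (G.mem_edgeSet).mpr hadja⟩ := by
      intro heq
      exact hab (Sym2.congr_right.mp (congrArg Subtype.val heq)).symm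
    have h1 := F1 G (hex _) hra _ (by rw [hua]; exact Sym2.mem_mk_left v b) hne
    have h2 := F1 G (hex _) hrb _ (by rw [hub]; exact Sym2.mem_mk_left v a) hne.symm
    omega
  have hstep2 : AN.card ≤ (univ.filter fun w => G.Adj v w ∧ key G S w < key G S v).card := by
    rcases AN.eq_empty_or_nonempty with hemp | ⟨w, hw⟩
    · simp [hemp]
    · have hadj : G.Adj v w := by
        rw [hANdef, Finset.mem_filter, hA, Finset.mem_filter] at hw; exact hw.1.2.1
      obtain ⟨hr, hu⟩ := hW w hw hadj
      obtain ⟨z, hadjz, hz⟩ := F2 G (hex _) hr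
      rw [hu] at hadjz
      have hlz : lvx G S z < rankE G S ⟨s(v, w), (G.mem_edgeSet).mpr hadj⟩ := by
        apply Finset.sup_lt_iff (by rw [show ((⊥:ℕ)) = 0 from rfl]; omega) |>.mpr
        intro g hg
        exact hz g (Finset.mem_filter.mp hg).2
      have hlv : rankE G S ⟨s(v, w), (G.mem_edgeSet).mpr hadj⟩ ≤ lvx G S v :=
        Finset.le_sup (Finset.mem_filter.mpr ⟨Finset.mem_univ _, Sym2.mem_mk_left v w⟩)
      have hkz : key G S z < key G S v := key_lt_of_lvx_lt G (by omega)
      calc AN.card ≤ 1 := hcard1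
        _ ≤ _ := Finset.card_pos.mpr ⟨z, Finset.mem_filter.mpr
            ⟨Finset.mem_univ _, hadjz, hkz⟩⟩
  omega

lemma sum_omegaS_le (S : Set G.edgeSet) : ∑ v, omegaS G S v ≤ S.ncard := by
  classical
  have h1 : ∑ v, omegaS G S v = (univ.sigma (fun v : V => univ.filter fun w =>
      G.Adj v w ∧ key G S v < key G S w ∧ s(v, w) ∈ (Subtype.val '' S))).card := by
    rw [Finset.card_sigma]
    rfl
  have h2 : (univ.sigma (fun v : V => univ.filter fun w =>
      G.Adj v w ∧ key G S v < key G S w ∧ s(v, w) ∈ (Subtype.val '' S))).card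
      ≤ (S.toFinset.image (Subtype.val)).card := by
    apply Finset.card_le_card_of_injOn (fun p => s(p.1, p.2))
    · intro p hp
      rw [Finset.mem_coe, Finset.mem_sigma, Finset.mem_filter] at hp
      obtain ⟨e, heS, heq⟩ := hp.2.2.2.2
      exact Finset.mem_image.mpr ⟨e, Set.mem_toFinset.mpr heS, heq⟩
    · rintro ⟨p1, p2⟩ hp ⟨q1, q2⟩ hq heq
      simp only [Finset.coe_sigma, Set.mem_sigma_iff, Finset.mem_coe,
        Finset.mem_filter, Finset.mem_univ, true_and] at hp hq
      rcases Sym2.eq_iff.mp heq with ⟨rfl, rfl⟩ | ⟨rfl, rfl⟩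
      · rfl
      · have hk1 : key G S p1 < key G S p2 := hp.2.1
        have hk2 : key G S p2 < key G S p1 := hq.2.1
        omega
  have h3 : (S.toFinset.image Subtype.val).card ≤ S.toFinset.card :=
    Finset.card_image_le
  rw [Set.ncard_eq_toFinset_card']
  omega

end PartII


theorem brushNumber'_le_zfNumber_lineGraph {V : Type*} [Fintype V] (G : SimpleGraph V)
    (hiso : ∀ v : V, ∃ w, G.Adj v w) :
    brushNumber' G ≤ zfNumber G.lineGraph := by
  classical
  haveI : DecidableEq V := Classical.decEq V
  haveI : DecidableRel G.Adj := Classical.decRel _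
  haveI : Fintype ↥G.edgeSet := Set.Finite.fintype (Set.toFinite _)
  unfold zfNumber
  apply le_csInf
  · exact ⟨(Set.univ : Set ↥G.edgeSet).ncard, Set.univ,
      fun e => ZFClosure.init (Set.mem_univ e), rfl⟩
  · rintro n ⟨S, hS, rfl⟩
    have hclean : Cleans G true (omegaS G S) :=
      cleans_of_key G (omegaS G S) (key G S) (key_inj G S) (main_count G hS)
    have h1 : brushNumber' G ≤ ∑ᶠ v, omegaS G S v :=
      Nat.sInf_le ⟨omegaS G S, hclean, rfl⟩
    have h2 : ∑ᶠ v, omegaS G S v = ∑ v, omegaS G S v := finsum_eq_sum_of_fintype _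
    have h3 := sum_omegaS_le G S
    omega

end Paper
end

section
/- If G is a graph with exactly k isolated vertices, then Z(G) ≤ Z(L(G)) + k. -/
open scoped BigOperators

namespace Paper

variable {V : Type*}

/-!
Let `B` be a zero-forcing set of `L(G)`. We choose an endpoint `χ e` of every edge `e ∈ B` so that
`χ '' B` together with the isolated vertices forces `G`, replaying the forcing process of `L(G)`.
When `ab` forces `bc`, every other edge at `a` or `b` is already black. Represent each of them,
where still allowed, by its endpoint away from `b`, and then away from `a`, and represent `bc` by
`c`: then `ab` yields `a`, `a` forces `b` (its other neighbours are represented) and `b` forces `c`.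
An endpoint is only ruled out for an edge once it is among the vertices `W` obtained in this way.
When every edge is black, an edge `ab` that can still be represented by either endpoint is
represented by `b` while every other edge avoids `b`, so that `b` forces `a`.
-/

section ZeroForcing

variable {G : SimpleGraph V} {S T : Set V}

theorem ZFClosure.bind (hT : ∀ x ∈ T, ZFClosure G S x) {v : V} (h : ZFClosure G T v) :
    ZFClosure G S v := by
  induction h with
  | init h => exact hT _ h
  | force _ hadj _ ih ihs => exact .force ih hadj ihs

theorem IsZeroForcingSet.mono (hST : S ⊆ T) (hS : IsZeroForcingSet G S) :
    IsZeroForcingSet G T :=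
  fun v => (hS v).bind fun _ hx => .init (hST hx)

theorem IsZeroForcingSet.of_forall_zfClosure (hT : IsZeroForcingSet G T)
    (h : ∀ x ∈ T, ZFClosure G S x) : IsZeroForcingSet G S :=
  fun v => (hT v).bind h

theorem IsZeroForcingSet.exists_force (hS : IsZeroForcingSet G S) (hne : S ≠ Set.univ) :
    ∃ v ∈ S, ∃ w ∉ S, G.Adj v w ∧ ∀ u, G.Adj v u → u ≠ w → u ∈ S := by
  by_contra! hcon
  have hclosed : ∀ v, ZFClosure G S v → v ∈ S := by
    intro v hv
    induction hv with
    | init h => exact h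
    | force _ hadj _ ih ihs =>
      by_contra hw
      obtain ⟨u, hu, huw, huS⟩ := hcon _ ih _ hw hadj
      exact huS (ihs u hu huw)
  exact hne (Set.eq_univ_of_forall fun v => hclosed v (hS v))

theorem zfNumber_le (hS : IsZeroForcingSet G S) : zfNumber G ≤ S.ncard :=
  Nat.sInf_le ⟨S, hS, rfl⟩

theorem exists_isZeroForcingSet_ncard_eq_zfNumber :
    ∃ S : Set V, IsZeroForcingSet G S ∧ S.ncard = zfNumber G :=
  Nat.sInf_mem (s := {n | ∃ S : Set V, IsZeroForcingSet G S ∧ S.ncard = n})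
    ⟨_, Set.univ, fun _ => .init trivial, rfl⟩

end ZeroForcing

open Classical in
noncomputable def avoid (a : V) (s : Set V) : Set V :=
  if s ⊆ {a} then s else s \ {a}

section Avoid

variable {a u x : V} {s : Set V}

theorem avoid_subset : avoid a s ⊆ s := by
  unfold avoid
  split_ifs
  exacts [subset_rfl, Set.sdiff_subset]

theorem avoid_nonempty (hs : s.Nonempty) : (avoid a s).Nonempty := by
  unfold avoid
  split_ifs with h
  · exact hs
  · exact Set.nonempty_of_not_subset h

theorem mem_avoid (hx : x ∈ s) (hxa : x ≠ a) : x ∈ avoid a s := by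
  unfold avoid
  split_ifs
  exacts [hx, ⟨hx, hxa⟩]

theorem avoid_of_notMem (ha : a ∉ s) : avoid a s = s := by
  unfold avoid
  split_ifs
  · rfl
  · exact Set.sdiff_singleton_eq_self ha

theorem avoid_subset_singleton (hs : s ⊆ {a, u}) (hu : u ∈ s) (hua : u ≠ a) :
    avoid a s ⊆ {u} := by
  have hsa : ¬ s ⊆ {a} := fun h => hua (h hu)
  unfold avoid
  rw [if_neg hsa]
  intro y ⟨hy, hya⟩
  rcases hs hy with rfl | rfl
  exacts [absurd rfl hya, rfl]

end Avoid

/-- `R e` holds the endpoints that may still represent the edge `e ∈ B`; an endpoint is ruled out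
only once it lies in `W`. -/
structure Admissible (G : SimpleGraph V) (B : Set G.edgeSet) (W : Set V)
    (R : G.edgeSet → Set V) : Prop where
  mem_edge : ∀ e, ∀ x ∈ R e, x ∈ (e : Sym2 V)
  nonempty : ∀ e ∈ B, (R e).Nonempty
  mem_of_notMem : ∀ e ∈ B, ∀ x ∈ (e : Sym2 V), x ∉ R e → x ∈ W

def HasForcingChoice (G : SimpleGraph V) (B : Set G.edgeSet) (W : Set V)
    (R : G.edgeSet → Set V) : Prop :=
  ∃ χ : G.edgeSet → V, (∀ e ∈ B, χ e ∈ R e) ∧ IsZeroForcingSet G (W ∪ χ '' B)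

namespace Admissible

variable {G : SimpleGraph V} {B : Set G.edgeSet} {W : Set V} {R : G.edgeSet → Set V}

theorem mono {W' : Set V} (hR : Admissible G B W R) (hW : W ⊆ W') : Admissible G B W' R :=
  ⟨hR.mem_edge, hR.nonempty, fun e he x hx hxR => hW (hR.mem_of_notMem e he x hx hxR)⟩

theorem avoid (hR : Admissible G B W R) (a : V) :
    Admissible G B (insert a W) (fun e => avoid a (R e)) where
  mem_edge e _ hx := hR.mem_edge e _ (avoid_subset hx)
  nonempty e he := avoid_nonempty (hR.nonempty e he)
  mem_of_notMem e he x hx hxR := by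
    by_cases hxa : x = a
    · exact .inl hxa
    · exact .inr (hR.mem_of_notMem e he x hx fun h => hxR (mem_avoid h hxa))

theorem update [DecidableEq V] (hR : Admissible G B W R) {g : G.edgeSet} {c : V}
    (hc : c ∈ (g : Sym2 V))
    (hgW : ∀ x ∈ (g : Sym2 V), x ≠ c → x ∈ W) :
    Admissible G (insert g B) W (Function.update R g {c}) where
  mem_edge e x hx := by
    rcases eq_or_ne e g with rfl | hne
    · rw [Function.update_self, Set.mem_singleton_iff] at hx
      exact hx ▸ hc
    · exact hR.mem_edge e x (by rwa [Function.update_of_ne hne] at hx)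
  nonempty e he := by
    rcases eq_or_ne e g with rfl | hne
    · simp
    · rw [Function.update_of_ne hne]
      exact hR.nonempty e (he.resolve_left hne)
  mem_of_notMem e he x hx hxR := by
    rcases eq_or_ne e g with rfl | hne
    · rw [Function.update_self, Set.mem_singleton_iff] at hxR
      exact hgW x hx hxR
    · rw [Function.update_of_ne hne] at hxR
      exact hR.mem_of_notMem e (he.resolve_left hne) x hx hxR

theorem mem_union_image (hR : Admissible G B W R) {χ : G.edgeSet → V} {e : G.edgeSet}
    (he : e ∈ B) {u : V} (hu : u ∈ (e : Sym2 V)) (hχ : u ∈ R e → χ e = u) :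
    u ∈ W ∪ χ '' B := by
  by_cases huR : u ∈ R e
  · exact .inr ⟨e, he, hχ huR⟩
  · exact .inl (hR.mem_of_notMem e he u hu huR)

theorem mem_of_mem_avoid (hR : Admissible G B W R) {χ : G.edgeSet → V} {e : G.edgeSet}
    (he : e ∈ B) {x u : V} (hxu : (e : Sym2 V) = s(x, u)) (hux : u ≠ x)
    (hχ : χ e ∈ Paper.avoid x (R e)) : u ∈ W ∪ χ '' B := by
  refine hR.mem_union_image he (hxu ▸ Sym2.mem_mk_right x u) fun huR => ?_
  have hsub : R e ⊆ {x, u} := fun y hy => Sym2.mem_iff.1 (hxu ▸ hR.mem_edge e y hy)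
  exact avoid_subset_singleton hsub huR hux hχ

end Admissible

section Steps

variable [DecidableEq V] {G : SimpleGraph V} {B : Set G.edgeSet} {W : Set V}
  {R : G.edgeSet → Set V}

theorem HasForcingChoice.of_represent (hR : Admissible G Set.univ W R) {e₀ : G.edgeSet}
    {a b : V} (he₀ : (e₀ : Sym2 V) = s(a, b)) (hb : b ∈ R e₀)
    (h : HasForcingChoice G Set.univ (insert a (insert b W))
      (Function.update (fun e => avoid b (R e)) e₀ {b})) :
    HasForcingChoice G Set.univ W R := by
  obtain ⟨χ, hχR, hχ⟩ := h
  have hχR' : ∀ e ≠ e₀, χ e ∈ avoid b (R e) := fun e hne => by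
    simpa [Function.update_of_ne hne] using hχR e trivial
  have hχe₀ : χ e₀ = b := by simpa using hχR e₀ trivial
  refine ⟨χ, fun e _ => ?_, hχ.of_forall_zfClosure ?_⟩
  · rcases eq_or_ne e e₀ with rfl | hne
    · exact hχe₀ ▸ hb
    · exact avoid_subset (hχR' e hne)
  have hbS : ZFClosure G (W ∪ χ '' Set.univ) b := .init (.inr ⟨e₀, trivial, hχe₀⟩)
  have hba : G.Adj b a := (G.mem_edgeSet.1 (he₀ ▸ e₀.2)).symm
  have haS : ZFClosure G (W ∪ χ '' Set.univ) a := by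
    refine .force hbS hba fun u hbu hua => .init ?_
    have hne : (⟨s(b, u), hbu⟩ : G.edgeSet) ≠ e₀ := fun h =>
      hua (Sym2.congr_right.1 ((congrArg Subtype.val h).trans (he₀.trans Sym2.eq_swap)))
    exact hR.mem_of_mem_avoid trivial rfl hbu.ne' (hχR' _ hne)
  rintro x ((rfl | rfl | hx) | ⟨e, -, rfl⟩)
  · exact haS
  · exact hbS
  · exact .init (.inl hx)
  · exact .init (.inr ⟨e, trivial, rfl⟩)

theorem HasForcingChoice.of_force (hR : Admissible G B W R) {f g : G.edgeSet} {a b c : V}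
    (hf : (f : Sym2 V) = s(a, b)) (hg : (g : Sym2 V) = s(b, c)) (hac : a ≠ c)
    (hfB : f ∈ B) (hgB : g ∉ B) (hforce : ∀ e, G.lineGraph.Adj f e → e ≠ g → e ∈ B)
    (h : HasForcingChoice G (insert g B) (insert a (insert b W))
      (Function.update (fun e => avoid a (avoid b (R e))) g {c})) :
    HasForcingChoice G B W R := by
  obtain ⟨χ, hχR, hχ⟩ := h
  have hχR' : ∀ e ∈ B, χ e ∈ avoid a (avoid b (R e)) := fun e he => by
    simpa [Function.update_of_ne (ne_of_mem_of_not_mem he hgB)] using hχR e (.inr he)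
  have hχg : χ g = c := by simpa using hχR g (.inl rfl)
  have hab : G.Adj a b := G.mem_edgeSet.1 (hf ▸ f.2)
  have hbc : G.Adj b c := G.mem_edgeSet.1 (hg ▸ g.2)
  have hmemB : ∀ x ∈ (f : Sym2 V), ∀ u (hxu : G.Adj x u),
      (⟨s(x, u), hxu⟩ : G.edgeSet) ≠ f → (⟨s(x, u), hxu⟩ : G.edgeSet) ≠ g →
      (⟨s(x, u), hxu⟩ : G.edgeSet) ∈ B :=
    fun x hx u _ hnef hneg =>
      hforce _ (SimpleGraph.lineGraph_adj_iff_exists.2 ⟨hnef.symm, x, hx, Sym2.mem_mk_left x u⟩)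
        hneg
  refine ⟨χ, fun e he => avoid_subset (avoid_subset (hχR' e he)), hχ.of_forall_zfClosure ?_⟩
  set S := W ∪ χ '' B
  have haS : ZFClosure G S a :=
    .init (hR.mem_of_mem_avoid hfB (hf.trans Sym2.eq_swap) hab.ne (avoid_subset (hχR' f hfB)))
  have hbS : ZFClosure G S b := by
    refine .force haS hab fun u hau hub => .init ?_
    have he : (⟨s(a, u), hau⟩ : G.edgeSet) ∈ B :=
      hmemB a (hf ▸ Sym2.mem_mk_left a b) u hau
        (by simp [Subtype.ext_iff, hf, hab.ne, hub]) (by simp [Subtype.ext_iff, hg, hab.ne, hac])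
    have hbR : b ∉ R ⟨s(a, u), hau⟩ := fun h => by
      rcases Sym2.mem_iff.1 (hR.mem_edge _ b h) with h | h
      exacts [hab.ne h.symm, hub h.symm]
    have := hχR' _ he
    rw [avoid_of_notMem hbR] at this
    exact hR.mem_of_mem_avoid he rfl hau.ne' this
  have hcS : ZFClosure G S c := by
    refine .force hbS hbc fun u hbu huc => ?_
    rcases eq_or_ne u a with rfl | hua
    · exact haS
    have he : (⟨s(b, u), hbu⟩ : G.edgeSet) ∈ B :=
      hmemB b (hf ▸ Sym2.mem_mk_right a b) u hbu
        (by simp [Subtype.ext_iff, hf, hbu.ne', hua])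
        (by simp [Subtype.ext_iff, hg, hbu.ne', huc])
    exact .init (hR.mem_of_mem_avoid he rfl hbu.ne' (avoid_subset (hχR' _ he)))
  rintro x ((rfl | rfl | hx) | ⟨e, rfl | he, rfl⟩)
  · exact haS
  · exact hbS
  · exact .init (.inl hx)
  · exact hχg ▸ hcS
  · exact .init (.inr ⟨e, he, rfl⟩)

end Steps

theorem Admissible.hasForcingChoice_of_decided {G : SimpleGraph V} {W : Set V}
    {R : G.edgeSet → Set V} (hR : Admissible G Set.univ W R)
    (hiso : {v | ∀ w, ¬ G.Adj v w} ⊆ W)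
    (hdec : ∀ e : G.edgeSet, ∃ x ∈ (e : Sym2 V), x ∉ R e) :
    HasForcingChoice G Set.univ W R := by
  choose χ hχ using fun e => hR.nonempty e trivial
  refine ⟨χ, fun e _ => hχ e, fun v => .init ?_⟩
  by_cases hv : ∀ w, ¬ G.Adj v w
  · exact .inl (hiso hv)
  push Not at hv
  obtain ⟨w, hvw⟩ := hv
  set e : G.edgeSet := ⟨s(v, w), hvw⟩
  refine hR.mem_union_image (e := e) trivial (Sym2.mem_mk_left v w) fun hvR => ?_
  obtain ⟨x, hx, hxR⟩ := hdec e
  rcases Sym2.mem_iff.1 hx with rfl | rfl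
  · exact absurd hvR hxR
  · rcases Sym2.mem_iff.1 (hR.mem_edge e _ (hχ e)) with h | h
    · exact h
    · exact absurd (h ▸ hχ e) hxR

section Construction

variable [DecidableEq V] [Finite V] {G : SimpleGraph V} {W : Set V} {R : G.edgeSet → Set V}

theorem Admissible.hasForcingChoice_univ (hR : Admissible G Set.univ W R)
    (hiso : {v | ∀ w, ¬ G.Adj v w} ⊆ W) : HasForcingChoice G Set.univ W R := by
  induction hn : {e : G.edgeSet | ∀ x ∈ (e : Sym2 V), x ∈ R e}.ncard
    using Nat.strong_induction_on generalizing W R with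
  | _ n ih =>
  by_cases hdec : ∀ e : G.edgeSet, ∃ x ∈ (e : Sym2 V), x ∉ R e
  · exact hR.hasForcingChoice_of_decided hiso hdec
  push Not at hdec
  obtain ⟨e₀, he₀⟩ := hdec
  obtain ⟨a, b, hab⟩ : ∃ a b, (e₀ : Sym2 V) = s(a, b) :=
    Sym2.ind (f := fun z => ∃ a b, z = s(a, b)) (fun a b => ⟨a, b, rfl⟩) _
  have hne : a ≠ b := (G.mem_edgeSet.1 (hab ▸ e₀.2)).ne
  set R' := Function.update (fun e => Paper.avoid b (R e)) e₀ {b}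
  have hR' : Admissible G Set.univ (insert a (insert b W)) R' := by
    have := ((hR.avoid b).mono (Set.subset_insert a _)).update (hab ▸ Sym2.mem_mk_right a b)
      fun x hx hxb => .inl ((Sym2.mem_iff.1 (hab ▸ hx)).resolve_right hxb)
    rwa [Set.insert_eq_of_mem (Set.mem_univ _)] at this
  have hlt : {e : G.edgeSet | ∀ x ∈ (e : Sym2 V), x ∈ R' e}.ncard < n := by
    have ha : ∀ {e : G.edgeSet}, (∀ x ∈ (e : Sym2 V), x ∈ R' e) → e ≠ e₀ := by
      rintro e he rfl
      simpa [R', hne] using he a (hab ▸ Sym2.mem_mk_left a b)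
    refine hn ▸ Set.ncard_lt_ncard ⟨fun e he x hx => ?_, fun h => ha (h he₀) rfl⟩
    exact avoid_subset (by simpa [R', Function.update_of_ne (ha he)] using he x hx)
  exact HasForcingChoice.of_represent hR hab (he₀ b (hab ▸ Sym2.mem_mk_right a b))
    (ih _ hlt hR' (hiso.trans ((Set.subset_insert _ _).trans (Set.subset_insert _ _))) rfl)

theorem Admissible.hasForcingChoice {B : Set G.edgeSet} (hR : Admissible G B W R)
    (hB : IsZeroForcingSet G.lineGraph B) (hiso : {v | ∀ w, ¬ G.Adj v w} ⊆ W) :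
    HasForcingChoice G B W R := by
  induction hn : Bᶜ.ncard using Nat.strong_induction_on generalizing B W R with
  | _ n ih =>
  rcases eq_or_ne B Set.univ with rfl | hBne
  · exact hR.hasForcingChoice_univ hiso
  obtain ⟨f, hfB, g, hgB, hfg, hforce⟩ := hB.exists_force hBne
  obtain ⟨hne, b, hbf, hbg⟩ := SimpleGraph.lineGraph_adj_iff_exists.1 hfg
  obtain ⟨a, hf⟩ := Sym2.mem_iff_exists.1 hbf
  obtain ⟨c, hg⟩ := Sym2.mem_iff_exists.1 hbg
  have hac : a ≠ c := by
    rintro rfl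
    exact hne (Subtype.ext (hf.trans hg.symm))
  refine HasForcingChoice.of_force hR (hf.trans Sym2.eq_swap) hg hac hfB hgB hforce ?_
  have hR' := ((hR.avoid b).avoid a).update (hg ▸ Sym2.mem_mk_right b c)
    fun x hx hxc => .inr (.inl ((Sym2.mem_iff.1 (hg ▸ hx)).resolve_right hxc))
  have hlt : (insert g B)ᶜ.ncard < n :=
    hn ▸ Set.ncard_lt_ncard (compl_lt_compl_iff_lt.2 (Set.ssubset_insert hgB))
  exact ih _ hlt hR' (hB.mono (Set.subset_insert g B))
    (hiso.trans ((Set.subset_insert _ _).trans (Set.subset_insert _ _))) rfl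

end Construction

theorem zfNumber_le_zfNumber_lineGraph_add_isolated {V : Type*} [Fintype V]
    (G : SimpleGraph V) (k : ℕ) (hk : {v : V | ∀ w, ¬ G.Adj v w}.ncard = k) :
    zfNumber G ≤ zfNumber G.lineGraph + k := by
  classical
  obtain ⟨B, hB, hBcard⟩ := exists_isZeroForcingSet_ncard_eq_zfNumber (G := G.lineGraph)
  have hR : Admissible G B {v | ∀ w, ¬ G.Adj v w} fun e => {x | x ∈ (e : Sym2 V)} :=
    ⟨fun _ _ hx => hx, fun _ _ => ⟨_, Sym2.out_fst_mem _⟩, fun _ _ _ hx hxR => absurd hx hxR⟩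
  obtain ⟨χ, -, hχ⟩ := hR.hasForcingChoice hB subset_rfl
  calc zfNumber G ≤ ({v | ∀ w, ¬ G.Adj v w} ∪ χ '' B).ncard := zfNumber_le hχ
    _ ≤ k + B.ncard := hk ▸ (Set.ncard_union_le _ _).trans (by gcongr; exact Set.ncard_image_le)
    _ = zfNumber G.lineGraph + k := by rw [hBcard, add_comm]

end Paper
end

section
/- For n ≥ 3, the brushing number of the complete graph K_n equals floor(n^2/4). -/
open scoped BigOperators

namespace Paper

variable {V : Type*}

/-!
Lower bound: along any cleaning sequence the dirty edges are exactly the edges between unfired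
vertices, the total number of brushes never increases, and every unfired vertex holds at least
one brush per fired neighbour (it received one along each of those edges). In `K_n`, at the
moment `⌊n/2⌋` vertices have fired, each of the `⌈n/2⌉` unfired vertices holds at least `⌊n/2⌋`
brushes, so at least `⌈n/2⌉⌊n/2⌋ = ⌊n²/4⌋` brushes were there at the start.

Upper bound: order the vertices and give each one its number of later neighbours minus its number
of earlier neighbours (truncated at `0`). Firing the vertices in order, each sending one brush per
dirty edge, cleans the graph; in `K_n` vertex `i` gets `n - 1 - 2i` brushes, which sum to `⌊n²/4⌋`.
-/

def unfiredEdges (G : SimpleGraph V) (F : Set V) : Set (Sym2 V) :=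
  {e ∈ G.edgeSet | ∀ u ∈ e, u ∉ F}

section UnfiredEdges

variable {G : SimpleGraph V} {F : Set V} {v w : V}

@[simp]
lemma mk_mem_unfiredEdges : s(v, w) ∈ unfiredEdges G F ↔ G.Adj v w ∧ v ∉ F ∧ w ∉ F := by
  simp [unfiredEdges]

lemma unfiredEdges_empty : unfiredEdges G ∅ = G.edgeSet := by
  simp [unfiredEdges]

lemma sep_notMem_unfiredEdges :
    {e ∈ unfiredEdges G F | v ∉ e} = unfiredEdges G (insert v F) := by
  ext e
  simp only [unfiredEdges, Set.mem_ofPred_eq, Set.mem_insert_iff, not_or]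
  grind

open Classical in
lemma ncard_neighborSet_inter_insert [Finite V] (hv : v ∉ F) :
    (G.neighborSet w ∩ insert v F).ncard =
      (G.neighborSet w ∩ F).ncard + if G.Adj w v then 1 else 0 := by
  split_ifs with hwv
  · rw [Set.inter_insert_of_mem (show v ∈ G.neighborSet w from hwv),
      Set.ncard_insert_of_notMem fun h => hv h.2]
  · rw [Set.inter_insert_of_notMem (show v ∉ G.neighborSet w from hwv), add_zero]

end UnfiredEdges

lemma neighborSet_top_inter_of_notMem {s : Set V} {v : V} (hv : v ∉ s) :
    (⊤ : SimpleGraph V).neighborSet v ∩ s = s := by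
  rw [SimpleGraph.neighborSet_top, Set.inter_eq_right, Set.subset_compl_singleton_iff]
  exact hv

lemma finsum_mem_sep_mem_eq_finsum_indicator {M : Type*} [AddCommMonoid M]
    (D : Set (Sym2 V)) (f : Sym2 V → M) (v : V) :
    ∑ᶠ e ∈ {e ∈ D | v ∈ e}, f e = ∑ᶠ w, D.indicator f s(v, w) := by
  have hrange : Set.range (fun w => s(v, w)) = {e : Sym2 V | v ∈ e} := by
    ext e; simp [Sym2.mem_iff_exists, eq_comm]
  have hinj : Function.Injective (fun w => s(v, w)) := fun _ _ => Sym2.congr_right.1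
  rw [← finsum_mem_range (f := D.indicator f) hinj, hrange]
  simp only [finsum_mem_def, Set.indicator_indicator]
  rw [Set.inter_comm]
  rfl

namespace BrushStep

variable {G : SimpleGraph V} {r : Bool} {c c' : BrushConfig V}

lemma ncard_fired [Finite V] (h : BrushStep G r c c') : c'.fired.ncard = c.fired.ncard + 1 := by
  obtain ⟨v, -, hv, -, -, hfired, -⟩ := h
  rw [hfired, Set.ncard_insert_of_notMem hv]

open Classical in
lemma sum_brushes_le [Fintype V] (h : BrushStep G r c c') :
    ∑ w, c'.brushes w ≤ ∑ w, c.brushes w := by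
  obtain ⟨v, f, -, -, hsent, -, -, hbrushes⟩ := h
  rw [finsum_mem_sep_mem_eq_finsum_indicator, finsum_eq_sum_of_fintype] at hsent
  calc ∑ w, c'.brushes w
      = ∑ w, (if w = v then 0 else c.brushes w) + ∑ w, c.dirty.indicator f s(v, w) := by
        simp only [hbrushes, Finset.sum_add_distrib]
    _ ≤ ∑ w, (if w = v then 0 else c.brushes w) + c.brushes v := by gcongr
    _ = ∑ w, c.brushes w := by
        rw [← Fintype.sum_ite_eq' v c.brushes, ← Finset.sum_add_distrib]
        exact Finset.sum_congr rfl fun w _ => by split_ifs <;> simp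

lemma dirty_eq_unfiredEdges (h : BrushStep G r c c') (hc : c.dirty = unfiredEdges G c.fired) :
    c'.dirty = unfiredEdges G c'.fired := by
  obtain ⟨v, -, -, -, -, hfired, hdirty, -⟩ := h
  rw [hdirty, hfired, hc, sep_notMem_unfiredEdges]

lemma ncard_neighborSet_inter_fired_le [Finite V] (h : BrushStep G r c c')
    (hc : c.dirty = unfiredEdges G c.fired)
    (hb : ∀ w ∉ c.fired, (G.neighborSet w ∩ c.fired).ncard ≤ c.brushes w) :
    ∀ w ∉ c'.fired, (G.neighborSet w ∩ c'.fired).ncard ≤ c'.brushes w := by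
  obtain ⟨v, f, hv, hf, -, hfired, -, hbrushes⟩ := h
  intro w hw
  rw [hfired, Set.mem_insert_iff, not_or] at hw
  obtain ⟨hwv, hw⟩ := hw
  rw [hfired, ncard_neighborSet_inter_insert hv, hbrushes, if_neg hwv]
  split_ifs with hadj
  · have hdirty : s(v, w) ∈ c.dirty := by
      rw [hc, mk_mem_unfiredEdges]
      exact ⟨hadj.symm, hv, hw⟩
    have hsent : 1 ≤ f s(v, w) := by
      have := hf _ hdirty (Sym2.mem_mk_left v w)
      cases r <;> simp_all
    rw [Set.indicator_of_mem hdirty]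
    have := hb w hw
    omega
  · exact (hb w hw).trans (Nat.le_add_right _ _)

end BrushStep

def BrushReachable (G : SimpleGraph V) (r : Bool) (ω : V → ℕ) (c : BrushConfig V) : Prop :=
  Relation.ReflTransGen (BrushStep G r) ⟨∅, G.edgeSet, ω⟩ c

namespace BrushReachable

variable {G : SimpleGraph V} {r : Bool} {ω : V → ℕ} {c : BrushConfig V}

lemma dirty_eq_unfiredEdges (h : BrushReachable G r ω c) : c.dirty = unfiredEdges G c.fired := by
  induction h with
  | refl => exact unfiredEdges_empty.symm
  | tail _ hstep ih => exact hstep.dirty_eq_unfiredEdges ih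

lemma ncard_neighborSet_inter_fired_le [Finite V] (h : BrushReachable G r ω c) :
    ∀ w ∉ c.fired, (G.neighborSet w ∩ c.fired).ncard ≤ c.brushes w := by
  induction h with
  | refl => simp
  | tail hreach hstep ih =>
    exact hstep.ncard_neighborSet_inter_fired_le (dirty_eq_unfiredEdges hreach) ih

lemma sum_brushes_le [Fintype V] (h : BrushReachable G r ω c) :
    ∑ w, c.brushes w ≤ ∑ w, ω w := by
  induction h with
  | refl => rfl
  | tail _ hstep ih => exact hstep.sum_brushes_le.trans ih

lemma exists_ncard_fired_eq [Finite V] {k : ℕ} (h : BrushReachable G r ω c)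
    (hk : k ≤ c.fired.ncard) : ∃ c', BrushReachable G r ω c' ∧ c'.fired.ncard = k := by
  induction h with
  | refl => exact ⟨_, .refl, by simp_all⟩
  | tail hreach hstep ih =>
    rw [hstep.ncard_fired] at hk
    rcases Nat.lt_or_eq_of_le hk with hlt | heq
    · exact ih (by omega)
    · exact ⟨_, .tail hreach hstep, by rw [hstep.ncard_fired, heq]⟩

lemma mul_le_sum_of_top [Fintype V] (h : BrushReachable (⊤ : SimpleGraph V) r ω c) :
    (Fintype.card V - c.fired.ncard) * c.fired.ncard ≤ ∑ w, ω w := by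
  classical
  have hunfired : ∀ w ∉ c.fired, c.fired.ncard ≤ c.brushes w := fun w hw => by
    simpa only [neighborSet_top_inter_of_notMem hw] using h.ncard_neighborSet_inter_fired_le w hw
  calc (Fintype.card V - c.fired.ncard) * c.fired.ncard
      = ∑ _w ∈ c.fired.toFinsetᶜ, c.fired.ncard := by
        simp [Finset.card_compl, Set.ncard_eq_toFinset_card']
    _ ≤ ∑ w ∈ c.fired.toFinsetᶜ, c.brushes w :=
        Finset.sum_le_sum fun w hw => hunfired w (by simpa using hw)
    _ ≤ ∑ w, c.brushes w := Finset.sum_le_sum_of_subset (Finset.subset_univ _)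
    _ ≤ ∑ w, ω w := h.sum_brushes_le

end BrushReachable

lemma Cleans.card_sub_half_mul_half_le_sum_of_top [Fintype V] {r : Bool} {ω : V → ℕ}
    (h : Cleans (⊤ : SimpleGraph V) r ω) :
    (Fintype.card V - Fintype.card V / 2) * (Fintype.card V / 2) ≤ ∑ w, ω w := by
  obtain ⟨c, hc, hfired⟩ := h
  obtain ⟨c', hc', hk⟩ := BrushReachable.exists_ncard_fired_eq (k := Fintype.card V / 2) hc
    (by rw [hfired, Set.ncard_univ, Nat.card_eq_fintype_card]; omega)
  simpa [hk] using hc'.mul_le_sum_of_top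

open Classical in
noncomputable def BrushConfig.fireOne (c : BrushConfig V) (v : V) : BrushConfig V where
  fired := insert v c.fired
  dirty := {e ∈ c.dirty | v ∉ e}
  brushes w := (if w = v then 0 else c.brushes w) + c.dirty.indicator 1 s(v, w)

lemma brushStep_fireOne {G : SimpleGraph V} {r : Bool} {c : BrushConfig V} {v : V}
    (hv : v ∉ c.fired) (hb : ∑ᶠ w, c.dirty.indicator 1 s(v, w) ≤ c.brushes v) :
    BrushStep G r c (c.fireOne v) :=
  ⟨v, 1, hv, fun _ _ _ => by cases r <;> simp,
    by rwa [finsum_mem_sep_mem_eq_finsum_indicator], rfl, rfl, fun _ => rfl⟩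

noncomputable def orderedBrushes [LinearOrder V] (G : SimpleGraph V) (v : V) : ℕ :=
  (G.neighborSet v ∩ Set.Ioi v).ncard - (G.neighborSet v ∩ Set.Iio v).ncard

structure IsOrderedStage {n : ℕ} (G : SimpleGraph (Fin n)) (k : ℕ) (c : BrushConfig (Fin n)) :
    Prop where
  fired_eq : c.fired = {u | u.val < k}
  dirty_eq : c.dirty = unfiredEdges G c.fired
  brushes_eq : ∀ w ∉ c.fired,
    c.brushes w = orderedBrushes G w + (G.neighborSet w ∩ c.fired).ncard

namespace IsOrderedStage

variable {n k : ℕ} {G : SimpleGraph (Fin n)} {c : BrushConfig (Fin n)}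

open Classical in
lemma indicator_dirty_mk (h : IsOrderedStage G k c) {v w : Fin n} (hv : v ∉ c.fired)
    (hw : w ∉ c.fired) : c.dirty.indicator 1 s(v, w) = if G.Adj v w then 1 else 0 := by
  simp [Set.indicator_apply, h.dirty_eq, hv, hw]

lemma fireOne (h : IsOrderedStage G k c) (hk : k < n) (r : Bool) :
    BrushStep G r c (c.fireOne ⟨k, hk⟩) ∧ IsOrderedStage G (k + 1) (c.fireOne ⟨k, hk⟩) := by
  set v : Fin n := ⟨k, hk⟩
  have hfired : c.fired = Set.Iio v := by
    ext u; simp [h.fired_eq, Fin.lt_def, v]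
  have hv : v ∉ c.fired := by simp [hfired]
  have hsent : ∑ᶠ w, c.dirty.indicator 1 s(v, w) = (G.neighborSet v ∩ Set.Ioi v).ncard := by
    rw [← finsum_one, finsum_mem_def]
    congr with w
    classical
    simp only [Set.indicator_apply, h.dirty_eq, mk_mem_unfiredEdges, hfired, Set.mem_Iio,
      Set.mem_inter_iff, SimpleGraph.mem_neighborSet, Set.mem_Ioi, Pi.one_apply]
    grind [SimpleGraph.Adj.ne]
  have hstep : BrushStep G r c (c.fireOne v) := by
    refine brushStep_fireOne hv ?_
    rw [hsent, h.brushes_eq v hv, orderedBrushes, hfired]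
    omega
  refine ⟨hstep, ⟨?_, hstep.dirty_eq_unfiredEdges h.dirty_eq, ?_⟩⟩
  · ext u
    simp only [BrushConfig.fireOne, h.fired_eq, Set.mem_insert_iff, Set.mem_ofPred_eq,
      Fin.ext_iff, v]
    omega
  · intro w hw
    simp only [BrushConfig.fireOne, Set.mem_insert_iff, not_or] at hw ⊢
    rw [if_neg hw.1, h.brushes_eq w hw.2, h.indicator_dirty_mk hv hw.2,
      ncard_neighborSet_inter_insert hv, G.adj_comm, add_assoc]

end IsOrderedStage

lemma exists_brushReachable_isOrderedStage {n k : ℕ} (G : SimpleGraph (Fin n)) (r : Bool)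
    (hk : k ≤ n) : ∃ c, BrushReachable G r (orderedBrushes G) c ∧ IsOrderedStage G k c := by
  induction k with
  | zero => exact ⟨_, .refl, ⟨by simp, unfiredEdges_empty.symm, by simp⟩⟩
  | succ k ih =>
    obtain ⟨c, hc, hstage⟩ := ih (by omega)
    obtain ⟨hstep, hstage'⟩ := hstage.fireOne (by omega) r
    exact ⟨_, hc.tail hstep, hstage'⟩

theorem cleans_orderedBrushes {n : ℕ} (G : SimpleGraph (Fin n)) (r : Bool) :
    Cleans G r (orderedBrushes G) := by
  obtain ⟨c, hc, hstage⟩ := exists_brushReachable_isOrderedStage G r le_rfl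
  exact ⟨c, hc, by simp [hstage.fired_eq]⟩

lemma orderedBrushes_top {n : ℕ} (v : Fin n) :
    orderedBrushes (⊤ : SimpleGraph (Fin n)) v = n - 1 - 2 * v := by
  rw [orderedBrushes, neighborSet_top_inter_of_notMem (s := Set.Ioi v) (lt_irrefl v),
    neighborSet_top_inter_of_notMem (s := Set.Iio v) (lt_irrefl v), ← Finset.coe_Ioi,
    ← Finset.coe_Iio, Set.ncard_coe_finset, Set.ncard_coe_finset, Fin.card_Ioi, Fin.card_Iio]
  omega

lemma sum_range_sub_one_sub_two_mul :
    ∀ n : ℕ, ∑ i ∈ Finset.range n, (n - 1 - 2 * i) = n ^ 2 / 4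
  | 0 => rfl
  | 1 => rfl
  | n + 2 => by
    rw [Finset.sum_range_succ', Finset.sum_range_succ]
    have hshift : ∀ i, n + 2 - 1 - 2 * (i + 1) = n - 1 - 2 * i := fun i => by omega
    simp only [hshift, sum_range_sub_one_sub_two_mul n]
    rw [show (n + 2) ^ 2 = n ^ 2 + (n + 1) * 4 by ring, Nat.add_mul_div_right _ _ (by norm_num)]
    omega

lemma sub_half_mul_half (n : ℕ) : (n - n / 2) * (n / 2) = n ^ 2 / 4 := by
  rcases Nat.even_or_odd' n with ⟨k, rfl | rfl⟩
  · rw [show 2 * k - 2 * k / 2 = k by omega, show 2 * k / 2 = k by omega,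
      show (2 * k) ^ 2 = k * k * 4 by ring, Nat.mul_div_cancel _ (by norm_num)]
  · rw [show 2 * k + 1 - (2 * k + 1) / 2 = k + 1 by omega, show (2 * k + 1) / 2 = k by omega,
      show (2 * k + 1) ^ 2 = 1 + (k * k + k) * 4 by ring, Nat.add_mul_div_right _ _ (by norm_num)]
    ring

theorem brushNumber_completeGraph_general (n : ℕ) :
    brushNumber (⊤ : SimpleGraph (Fin n)) = n ^ 2 / 4 := by
  have hsum : ∑ᶠ v, orderedBrushes (⊤ : SimpleGraph (Fin n)) v = n ^ 2 / 4 := by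
    simp only [finsum_eq_sum_of_fintype, orderedBrushes_top]
    rw [Fin.sum_univ_eq_sum_range (fun i => n - 1 - 2 * i), sum_range_sub_one_sub_two_mul]
  apply le_antisymm
  · exact Nat.sInf_le ⟨_, cleans_orderedBrushes ⊤ false, hsum⟩
  · refine le_csInf ⟨_, _, cleans_orderedBrushes ⊤ false, hsum⟩ ?_
    rintro _ ⟨ω, hω, rfl⟩
    have := hω.card_sub_half_mul_half_le_sum_of_top
    rwa [Fintype.card_fin, sub_half_mul_half, ← finsum_eq_sum_of_fintype] at this

theorem brushNumber_completeGraph (n : ℕ) (hn : 3 ≤ n) :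
    brushNumber (⊤ : SimpleGraph (Fin n)) = n ^ 2 / 4 :=
  brushNumber_completeGraph_general n

end Paper
end

section
/- The brushing number of the Cartesian product P_r □ C_s satisfies B(P_r □ C_s) ≤ s + 2 for all integers r ≥ 1 and s ≥ 3. -/
open scoped BigOperators

namespace Paper

variable {V : Type*}

lemma cleans_of_order [Fintype V] [DecidableEq V] (G : SimpleGraph V) [DecidableRel G.Adj]
    (ord : V → ℕ) (hord : Function.Injective ord)
    (F : V → V → ℕ) (ω : V → ℕ)
    (h1 : ∀ v w, G.Adj v w → ord v < ord w → 1 ≤ F v w)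
    (h2 : ∀ v : V, (∑ w : V, if G.Adj v w ∧ ord v < ord w then F v w else 0)
        ≤ ω v + ∑ u : V, if G.Adj u v ∧ ord u < ord v then F u v else 0) :
    Cleans G false ω := by
  classical
  let C : ℕ → BrushConfig V := fun n =>
    { fired := {w | ord w < n}
      dirty := {e ∈ G.edgeSet | ∀ x ∈ e, ¬ ord x < n}
      brushes := fun w => if ord w < n then 0 else
        ω w + ∑ u : V, if G.Adj u w ∧ ord u < n then F u w else 0 }
  have hC0 : C 0 = ⟨∅, G.edgeSet, ω⟩ := by
    refine BrushConfig.mk.injEq .. ▸ ?_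
    refine ⟨?_, ?_, ?_⟩
    · ext w; simp [C]
    · ext e; simp [C]
    · funext w; simp [C]
  have key : ∀ n, Relation.ReflTransGen (BrushStep G false) (C 0) (C n) := by
    intro n
    induction n with
    | zero => exact .refl
    | succ n ih =>
      by_cases hv : ∃ v, ord v = n
      · obtain ⟨v, hvn⟩ := hv
        refine ih.tail ?_
        refine ⟨v, fun e => if h : v ∈ e then F v (Sym2.Mem.other' h) else 0, ?_, ?_, ?_, ?_, ?_, ?_⟩
        · simp [C, hvn]
        · intro e he hve
          obtain ⟨heE, hecl⟩ := he
          simp only [Bool.false_eq_true, if_false]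
          rw [dif_pos hve]
          set w := Sym2.Mem.other' hve with hw
          have hadj : G.Adj v w := by
            rw [← G.mem_edgeSet, Sym2.other_spec' hve]; exact heE
          refine h1 v w hadj ?_
          have hwm : w ∈ e := Sym2.other_mem' hve
          have h1' : ¬ ord w < n := hecl w hwm
          have h2' : ord w ≠ n := by
            intro h; exact (G.ne_of_adj hadj).symm (hord (h.trans hvn.symm))
          omega
        · -- sum condition
          have hset : {e ∈ (C n).dirty | v ∈ e} =
              ↑((Finset.univ.filter (fun w => G.Adj v w ∧ n < ord w)).image
                (fun w => s(v, w))) := by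
            ext e
            simp only [Set.mem_setOf_eq, Finset.coe_image, Set.mem_image, Finset.mem_coe,
              Finset.mem_filter, Finset.mem_univ, true_and]
            constructor
            · rintro ⟨⟨heE, hecl⟩, hve⟩
              refine ⟨Sym2.Mem.other' hve, ⟨?_, ?_⟩, Sym2.other_spec' hve⟩
              · rw [← G.mem_edgeSet, Sym2.other_spec' hve]; exact heE
              · have hadj : G.Adj v (Sym2.Mem.other' hve) := by
                  rw [← G.mem_edgeSet, Sym2.other_spec' hve]; exact heE
                have h1' : ¬ ord (Sym2.Mem.other' hve) < n := hecl _ (Sym2.other_mem' hve)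
                have h2' : ord (Sym2.Mem.other' hve) ≠ n := by
                  intro h; exact (G.ne_of_adj hadj).symm (hord (h.trans hvn.symm))
                omega
            · rintro ⟨w, ⟨hadj, hw⟩, rfl⟩
              refine ⟨⟨G.mem_edgeSet.mpr hadj, ?_⟩, Sym2.mem_mk_left v w⟩
              intro x hx
              rcases Sym2.mem_iff.mp hx with rfl | rfl
              · omega
              · omega
          rw [hset, finsum_mem_coe_finset]
          rw [Finset.sum_image (by
            intro w1 _ w2 _ hser
            exact Sym2.congr_right.mp hser)]
          have heval : ∀ w ∈ Finset.univ.filter (fun w => G.Adj v w ∧ n < ord w),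
              (fun e => if h : v ∈ e then F v (Sym2.Mem.other' h) else 0) s(v, w) = F v w := by
            intro w hw
            have hmem : v ∈ s(v, w) := Sym2.mem_mk_left v w
            show (if h : v ∈ s(v, w) then F v (Sym2.Mem.other' h) else 0) = F v w
            rw [dif_pos hmem]
            congr 1
            have := Sym2.other_spec' hmem
            exact Sym2.congr_right.mp this
          rw [Finset.sum_congr rfl heval]
          have hbr : (C n).brushes v = ω v + ∑ u : V, if G.Adj u v ∧ ord u < n then F u v else 0 := by
            simp only [C]
            rw [if_neg (by omega)]
          rw [hbr, ← hvn, Finset.sum_filter]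
          exact h2 v
        · ext w
          simp only [C, Set.mem_setOf_eq, Set.mem_insert_iff]
          constructor
          · intro h
            rcases Nat.lt_succ_iff_lt_or_eq.mp h with h | h
            · exact Or.inr h
            · exact Or.inl (hord (h.trans hvn.symm))
          · rintro (rfl | h) <;> omega
        · ext e
          simp only [C, Set.mem_setOf_eq]
          constructor
          · rintro ⟨heE, hcl⟩
            refine ⟨⟨heE, fun x hx => by have := hcl x hx; omega⟩, fun hve => ?_⟩
            have := hcl v hve; omega
          · rintro ⟨⟨heE, hcl⟩, hve⟩
            refine ⟨heE, fun x hx => ?_⟩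
            have h1' := hcl x hx
            have : x ≠ v := fun h => hve (h ▸ hx)
            have : ord x ≠ n := fun h => this (hord (h.trans hvn.symm))
            omega
        · intro w
          by_cases hwv : w = v
          · subst hwv
            rw [if_pos rfl]
            have hnd : s(w, w) ∉ (C n).dirty := by
              intro h
              exact G.irrefl (G.mem_edgeSet.mp h.1)
            rw [Set.indicator_of_notMem hnd]
            simp only [C]
            rw [if_pos (by omega : ord w < n + 1)]
            rfl
          · rw [if_neg hwv]
            have hwn : ord w ≠ n := fun h => hwv (hord (h.trans hvn.symm))
            by_cases hw : ord w < n
            · have hnd : s(v, w) ∉ (C n).dirty := by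
                rintro ⟨-, hcl⟩
                exact (hcl w (Sym2.mem_mk_right v w)) hw
              rw [Set.indicator_of_notMem hnd]
              simp only [C]
              rw [if_pos (by omega : ord w < n + 1), if_pos hw]
              rfl
            · have hsum : (∑ u : V, if G.Adj u w ∧ ord u < n + 1 then F u w else 0)
                  = (∑ u : V, if G.Adj u w ∧ ord u < n then F u w else 0)
                    + (if G.Adj v w then F v w else 0) := by
                have : ∀ u : V, (if G.Adj u w ∧ ord u < n + 1 then F u w else 0)
                    = (if G.Adj u w ∧ ord u < n then F u w else 0)
                      + (if u = v then (if G.Adj v w then F v w else 0) else 0) := by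
                  intro u
                  by_cases hu : u = v
                  · subst hu
                    have h0 : ¬ (G.Adj u w ∧ ord u < n) := fun h => by omega
                    rw [if_neg h0, if_pos rfl]
                    by_cases hA : G.Adj u w
                    · rw [if_pos ⟨hA, by omega⟩, if_pos hA]
                      omega
                    · rw [if_neg (fun h => hA h.1), if_neg hA]
                  · rw [if_neg hu]
                    have hun : ord u ≠ n := fun h => hu (hord (h.trans hvn.symm))
                    by_cases hA : G.Adj u w ∧ ord u < n
                    · rw [if_pos ⟨hA.1, by omega⟩, if_pos hA]
                      omega
                    · have h0 : ¬ (G.Adj u w ∧ ord u < n + 1) := by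
                        rintro ⟨h1', h2'⟩; exact hA ⟨h1', by omega⟩
                      rw [if_neg h0, if_neg hA]
                rw [Finset.sum_congr rfl fun u _ => this u, Finset.sum_add_distrib,
                  Finset.sum_ite_eq' Finset.univ v
                    (fun _ => if G.Adj v w then F v w else 0)]
                rw [if_pos (Finset.mem_univ v)]
              have hind : (C n).dirty.indicator
                  (fun e => if h : v ∈ e then F v (Sym2.Mem.other' h) else 0) s(v, w)
                  = if G.Adj v w then F v w else 0 := by
                by_cases hA : G.Adj v w
                · have hmem : s(v, w) ∈ (C n).dirty := by
                    refine ⟨G.mem_edgeSet.mpr hA, fun x hx => ?_⟩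
                    rcases Sym2.mem_iff.mp hx with rfl | rfl <;> omega
                  rw [Set.indicator_of_mem hmem, if_pos hA]
                  have hm2 : v ∈ s(v, w) := Sym2.mem_mk_left v w
                  rw [dif_pos hm2]
                  congr 1
                  exact Sym2.congr_right.mp (Sym2.other_spec' hm2)
                · have hnd : s(v, w) ∉ (C n).dirty := fun h =>
                    hA (G.mem_edgeSet.mp h.1)
                  rw [Set.indicator_of_notMem hnd, if_neg hA]
              simp only [C]
              rw [if_neg (by omega), if_neg hw, hind, hsum]
              omega
      · have hne : ∀ w : V, ord w ≠ n := fun w h => hv ⟨w, h⟩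
        have hCe : C (n + 1) = C n := by
          refine BrushConfig.mk.injEq .. ▸ ?_
          refine ⟨?_, ?_, ?_⟩
          · ext w
            simp only [C, Set.mem_setOf_eq]
            have := hne w
            omega
          · ext e
            simp only [C, Set.mem_setOf_eq]
            constructor
            · rintro ⟨h1', h2'⟩
              exact ⟨h1', fun x hx => by have := hne x; have := h2' x hx; omega⟩
            · rintro ⟨h1', h2'⟩
              exact ⟨h1', fun x hx => by have := hne x; have := h2' x hx; omega⟩
          · funext w
            have hiff : (ord w < n + 1) = (ord w < n) := by
              have := hne w
              simp only [eq_iff_iff]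
              omega
            have hsum : (∑ u : V, if G.Adj u w ∧ ord u < n + 1 then F u w else 0)
                = ∑ u : V, if G.Adj u w ∧ ord u < n then F u w else 0 := by
              refine Finset.sum_congr rfl fun u _ => ?_
              have := hne u
              congr 1
              simp only [eq_iff_iff]
              constructor <;> rintro ⟨ha, hb⟩ <;> exact ⟨ha, by omega⟩
            rw [hsum]
            by_cases h : ord w < n
            · rw [if_pos h, if_pos (show ord w < n + 1 by omega)]
            · rw [if_neg h, if_neg (show ¬ ord w < n + 1 by have := hne w; omega)]
        rw [hCe]; exact ih
  obtain ⟨N, hN⟩ : ∃ N, ∀ w : V, ord w < N :=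
    ⟨(Finset.univ.sup ord) + 1, fun w => Nat.lt_succ_of_le (Finset.le_sup (Finset.mem_univ w))⟩
  refine ⟨C N, hC0 ▸ key N, ?_⟩
  ext w
  simp [C, hN w]


def pp (s n : ℕ) (k : Fin s) : ℕ := if n % 2 = 0 then (k : ℕ) else s - 1 - (k : ℕ)

lemma pp_lt {s : ℕ} (hs : 0 < s) (n : ℕ) (k : Fin s) : pp s n k < s := by
  have := k.isLt; unfold pp; split <;> omega

lemma pp_inj {s n : ℕ} {k l : Fin s} (h : pp s n k = pp s n l) : k = l := by
  have := k.isLt; have := l.isLt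
  unfold pp at h
  split at h <;> exact Fin.ext (by omega)

def ordFn (r s : ℕ) (v : Fin r × Fin s) : ℕ := (v.1 : ℕ) * s + pp s (v.1 : ℕ) v.2

lemma ordFn_inj {r s : ℕ} (hs : 0 < s) : Function.Injective (ordFn r s) := by
  rintro ⟨i, k⟩ ⟨j, l⟩ h
  simp only [ordFn] at h
  have hk := pp_lt hs (i : ℕ) k
  have hl := pp_lt hs (j : ℕ) l
  have hij : (i : ℕ) = (j : ℕ) := by
    rcases lt_trichotomy (i : ℕ) (j : ℕ) with hlt | he | hlt
    · have h2 : ((i : ℕ) + 1) * s ≤ (j : ℕ) * s := Nat.mul_le_mul_right s (by omega)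
      rw [add_mul, one_mul] at h2
      omega
    · exact he
    · have h2 : ((j : ℕ) + 1) * s ≤ (i : ℕ) * s := Nat.mul_le_mul_right s (by omega)
      rw [add_mul, one_mul] at h2
      omega
  have hieq : i = j := Fin.ext hij
  subst hieq
  have hpp : pp s (i : ℕ) k = pp s (i : ℕ) l := by omega
  rw [pp_inj hpp]

def FFn (r s : ℕ) (v w : Fin r × Fin s) : ℕ :=
  if w.1 = v.1 then 1 else if pp s (v.1 : ℕ) v.2 = s - 1 then 3 else 1

def wFn (r s : ℕ) (v : Fin r × Fin s) : ℕ :=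
  if (v.1 : ℕ) = 0 then (if (v.2 : ℕ) = 0 then 3 else 1) else 0

lemma cyc_adj_succ {m : ℕ} (a : Fin (m+3)) (hb : (a : ℕ) + 1 < m + 3) :
    (SimpleGraph.cycleGraph (m+3)).Adj a ⟨(a : ℕ) + 1, hb⟩ := by
  rw [SimpleGraph.cycleGraph_adj']
  right
  rw [Fin.sub_def]
  show ((m + 3 - (a : ℕ)) + ((a : ℕ) + 1)) % (m + 3) = 1
  have ha := a.isLt
  have h1 : (m + 3 - (a : ℕ)) + ((a : ℕ) + 1) = (m + 3) + 1 := by omega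
  rw [h1, Nat.add_mod_left]
  exact Nat.mod_eq_of_lt (by omega)

lemma sum_fin_ite_val {r c : ℕ} (g : ℕ → ℕ) :
    (∑ j : Fin r, if (j : ℕ) = c then g (j : ℕ) else 0) = if c < r then g c else 0 := by
  by_cases h : c < r
  · rw [if_pos h, Finset.sum_eq_single_of_mem (⟨c, h⟩ : Fin r) (Finset.mem_univ _)]
    · rw [if_pos rfl]
    · intro j _ hne
      exact if_neg (fun hv => hne (Fin.ext hv))
  · rw [if_neg h]
    exact Finset.sum_eq_zero fun j _ => if_neg (fun hv => h (lt_of_eq_of_lt hv.symm j.isLt))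

theorem brushNumber_pathGraph_boxProd_cycleGraph (r s : ℕ) (hr : 1 ≤ r) (hs : 3 ≤ s) :
    brushNumber ((SimpleGraph.pathGraph r).boxProd (SimpleGraph.cycleGraph s)) ≤ s + 2 := by
  classical
  obtain ⟨m, rfl⟩ : ∃ m, s = m + 3 := ⟨s - 3, by omega⟩
  haveI hdp : DecidableRel (SimpleGraph.pathGraph r).Adj :=
    fun a b => decidable_of_iff _ (SimpleGraph.pathGraph_adj).symm
  haveI hdG : DecidableRel ((SimpleGraph.pathGraph r).boxProd (SimpleGraph.cycleGraph (m+3))).Adj :=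
    fun x y => decidable_of_iff _ (SimpleGraph.boxProd_adj).symm
  unfold brushNumber
  apply Nat.sInf_le
  refine ⟨wFn r (m+3), ?_, ?_⟩
  · refine cleans_of_order _ (ordFn r (m+3)) (ordFn_inj (by omega)) (FFn r (m+3)) _ ?_ ?_
    · intro v w _ _
      unfold FFn
      split_ifs <;> omega
    · intro v
      obtain ⟨i, k⟩ := v
      have hs0 : (0:ℕ) < m + 3 := by omega
      have hterm : ∀ a b : Fin r × Fin (m+3),
          (if ((SimpleGraph.pathGraph r).boxProd (SimpleGraph.cycleGraph (m+3))).Adj a b ∧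
              ordFn r (m+3) a < ordFn r (m+3) b then FFn r (m+3) a b else 0)
          = (if b.1 = a.1 ∧ (SimpleGraph.cycleGraph (m+3)).Adj a.2 b.2 ∧
                pp (m+3) (a.1 : ℕ) a.2 < pp (m+3) (a.1 : ℕ) b.2 then 1 else 0)
            + (if b.2 = a.2 ∧ (b.1 : ℕ) = (a.1 : ℕ) + 1 then
                (if pp (m+3) (a.1 : ℕ) a.2 = (m+3) - 1 then 3 else 1) else 0) := by
        rintro ⟨i', k'⟩ ⟨j', l'⟩
        dsimp only
        have hppi := pp_lt hs0 (i' : ℕ) k'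
        have hppj := pp_lt hs0 (j' : ℕ) l'
        by_cases hj : j' = i'
        · subst hj
          have hns : ¬ (l' = k' ∧ (j' : ℕ) = (j' : ℕ) + 1) := by rintro ⟨-, h⟩; omega
          rw [if_neg hns]
          by_cases hA : (SimpleGraph.cycleGraph (m+3)).Adj k' l'
          · by_cases hlt : pp (m+3) (j' : ℕ) k' < pp (m+3) (j' : ℕ) l'
            · have hcond : ((SimpleGraph.pathGraph r).boxProd (SimpleGraph.cycleGraph (m+3))).Adj (j', k') (j', l') ∧
                  ordFn r (m+3) (j', k') < ordFn r (m+3) (j', l') := by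
                refine ⟨SimpleGraph.boxProd_adj.mpr (Or.inr ⟨hA, rfl⟩), ?_⟩
                simp only [ordFn]
                omega
              rw [if_pos hcond, if_pos ⟨rfl, hA, hlt⟩]
              simp [FFn]
            · have hcond : ¬ (((SimpleGraph.pathGraph r).boxProd (SimpleGraph.cycleGraph (m+3))).Adj (j', k') (j', l') ∧
                  ordFn r (m+3) (j', k') < ordFn r (m+3) (j', l')) := by
                rintro ⟨-, hord⟩
                simp only [ordFn] at hord
                exact hlt (by omega)
              have hn1 : ¬ (j' = j' ∧ (SimpleGraph.cycleGraph (m+3)).Adj k' l' ∧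
                  pp (m+3) (j' : ℕ) k' < pp (m+3) (j' : ℕ) l') := fun h => hlt h.2.2
              rw [if_neg hcond, if_neg hn1]
          · have hcond : ¬ (((SimpleGraph.pathGraph r).boxProd (SimpleGraph.cycleGraph (m+3))).Adj (j', k') (j', l') ∧
                ordFn r (m+3) (j', k') < ordFn r (m+3) (j', l')) := by
              rintro ⟨hadj, -⟩
              rcases SimpleGraph.boxProd_adj.mp hadj with ⟨hp, -⟩ | ⟨hc, -⟩
              · exact (SimpleGraph.pathGraph r).irrefl hp
              · exact hA hc
            have hn1 : ¬ (j' = j' ∧ (SimpleGraph.cycleGraph (m+3)).Adj k' l' ∧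
                pp (m+3) (j' : ℕ) k' < pp (m+3) (j' : ℕ) l') := fun h => hA h.2.1
            rw [if_neg hcond, if_neg hn1]
        · have hn1 : ¬ (j' = i' ∧ (SimpleGraph.cycleGraph (m+3)).Adj k' l' ∧
              pp (m+3) (i' : ℕ) k' < pp (m+3) (i' : ℕ) l') := fun h => hj h.1
          rw [if_neg hn1]
          by_cases hl : l' = k'
          · by_cases hf : (j' : ℕ) = (i' : ℕ) + 1
            · have hadj : ((SimpleGraph.pathGraph r).boxProd (SimpleGraph.cycleGraph (m+3))).Adj (i', k') (j', l') :=
                SimpleGraph.boxProd_adj.mpr (Or.inl ⟨SimpleGraph.pathGraph_adj.mpr (Or.inl hf.symm), hl.symm⟩)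
              have hord : ordFn r (m+3) (i', k') < ordFn r (m+3) (j', l') := by
                simp only [ordFn]
                have hm : (j' : ℕ) * (m+3) = (i' : ℕ) * (m+3) + (m+3) := by rw [hf, add_mul, one_mul]
                omega
              rw [if_pos ⟨hadj, hord⟩, if_pos ⟨hl, hf⟩]
              simp only [FFn]
              rw [if_neg hj]
              omega
            · have hn2 : ¬ (l' = k' ∧ (j' : ℕ) = (i' : ℕ) + 1) := fun h => hf h.2
              rw [if_neg hn2]
              by_cases hb : (i' : ℕ) = (j' : ℕ) + 1
              · have hcond : ¬ (((SimpleGraph.pathGraph r).boxProd (SimpleGraph.cycleGraph (m+3))).Adj (i', k') (j', l') ∧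
                    ordFn r (m+3) (i', k') < ordFn r (m+3) (j', l')) := by
                  rintro ⟨-, hord⟩
                  simp only [ordFn] at hord
                  have hm : (i' : ℕ) * (m+3) = (j' : ℕ) * (m+3) + (m+3) := by rw [hb, add_mul, one_mul]
                  omega
                rw [if_neg hcond]
              · have hcond : ¬ (((SimpleGraph.pathGraph r).boxProd (SimpleGraph.cycleGraph (m+3))).Adj (i', k') (j', l') ∧
                    ordFn r (m+3) (i', k') < ordFn r (m+3) (j', l')) := by
                  rintro ⟨hadj, -⟩
                  rcases SimpleGraph.boxProd_adj.mp hadj with ⟨hp, -⟩ | ⟨-, he⟩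
                  · rcases SimpleGraph.pathGraph_adj.mp hp with h | h
                    · exact hf h.symm
                    · exact hb h.symm
                  · exact hj he.symm
                rw [if_neg hcond]
          · have hcond : ¬ (((SimpleGraph.pathGraph r).boxProd (SimpleGraph.cycleGraph (m+3))).Adj (i', k') (j', l') ∧
                ordFn r (m+3) (i', k') < ordFn r (m+3) (j', l')) := by
              rintro ⟨hadj, -⟩
              rcases SimpleGraph.boxProd_adj.mp hadj with ⟨-, he⟩ | ⟨-, he⟩
              · exact hl he.symm
              · exact hj he.symm
            have hn2 : ¬ (l' = k' ∧ (j' : ℕ) = (i' : ℕ) + 1) := fun h => hl h.1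
            rw [if_neg hcond, if_neg hn2]
      -- the outgoing sum
      have hL : (∑ w : Fin r × Fin (m+3),
          if ((SimpleGraph.pathGraph r).boxProd (SimpleGraph.cycleGraph (m+3))).Adj (i, k) w ∧
             ordFn r (m+3) (i, k) < ordFn r (m+3) w then FFn r (m+3) (i, k) w else 0)
          = (∑ l : Fin (m+3), if (SimpleGraph.cycleGraph (m+3)).Adj k l ∧
                pp (m+3) (i : ℕ) k < pp (m+3) (i : ℕ) l then 1 else 0)
            + (if (i : ℕ) + 1 < r then (if pp (m+3) (i : ℕ) k = (m+3) - 1 then 3 else 1) else 0) := by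
        rw [Fintype.sum_prod_type]
        have step : ∀ (j : Fin r) (l : Fin (m+3)),
            (if ((SimpleGraph.pathGraph r).boxProd (SimpleGraph.cycleGraph (m+3))).Adj (i, k) (j, l) ∧
               ordFn r (m+3) (i, k) < ordFn r (m+3) (j, l) then FFn r (m+3) (i, k) (j, l) else 0)
            = (if j = i then (if (SimpleGraph.cycleGraph (m+3)).Adj k l ∧
                  pp (m+3) (i : ℕ) k < pp (m+3) (i : ℕ) l then 1 else 0) else 0)
              + (if (j : ℕ) = (i : ℕ) + 1 then
                  (if l = k then (if pp (m+3) (i : ℕ) k = (m+3) - 1 then 3 else 1) else 0) else 0) := by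
          intro j l
          have h := hterm (i, k) (j, l)
          dsimp only at h
          rw [h]
          congr 1
          · by_cases hj : j = i
            · subst hj
              by_cases hX : (SimpleGraph.cycleGraph (m+3)).Adj k l ∧
                  pp (m+3) (j : ℕ) k < pp (m+3) (j : ℕ) l
              · rw [if_pos ⟨rfl, hX⟩, if_pos rfl, if_pos hX]
              · rw [if_neg (fun h' => hX h'.2), if_pos rfl, if_neg hX]
            · rw [if_neg (fun h' => hj h'.1), if_neg hj]
          · by_cases hf : (j : ℕ) = (i : ℕ) + 1
            · rw [if_pos hf]
              by_cases hl2 : l = k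
              · rw [if_pos ⟨hl2, hf⟩, if_pos hl2]
              · rw [if_neg (fun h' => hl2 h'.1), if_neg hl2]
            · rw [if_neg (fun h' => hf h'.2), if_neg hf]
        simp only [step, Finset.sum_add_distrib]
        congr 1
        · have e1 : ∀ j : Fin r, (∑ l : Fin (m+3),
              if j = i then (if (SimpleGraph.cycleGraph (m+3)).Adj k l ∧
                pp (m+3) (i : ℕ) k < pp (m+3) (i : ℕ) l then 1 else 0) else 0)
              = (if j = i then (∑ l : Fin (m+3), if (SimpleGraph.cycleGraph (m+3)).Adj k l ∧
                pp (m+3) (i : ℕ) k < pp (m+3) (i : ℕ) l then 1 else 0) else 0) := by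
            intro j
            by_cases hj : j = i <;> simp [hj]
          rw [Finset.sum_congr rfl fun j _ => e1 j]
          rw [Finset.sum_ite_eq' Finset.univ i, if_pos (Finset.mem_univ i)]
        · have e2 : ∀ j : Fin r, (∑ l : Fin (m+3),
              if (j : ℕ) = (i : ℕ) + 1 then
                (if l = k then (if pp (m+3) (i : ℕ) k = (m+3) - 1 then 3 else 1) else 0) else 0)
              = (if (j : ℕ) = (i : ℕ) + 1 then (if pp (m+3) (i : ℕ) k = (m+3) - 1 then 3 else 1) else 0) := by
            intro j
            by_cases hf : (j : ℕ) = (i : ℕ) + 1 <;> simp [hf]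
          rw [Finset.sum_congr rfl fun j _ => e2 j]
          exact sum_fin_ite_val (fun _ => if pp (m+3) (i : ℕ) k = (m+3) - 1 then 3 else 1)
      -- the incoming sum
      have hR : (∑ u : Fin r × Fin (m+3),
          if ((SimpleGraph.pathGraph r).boxProd (SimpleGraph.cycleGraph (m+3))).Adj u (i, k) ∧
             ordFn r (m+3) u < ordFn r (m+3) (i, k) then FFn r (m+3) u (i, k) else 0)
          = (∑ l : Fin (m+3), if (SimpleGraph.cycleGraph (m+3)).Adj l k ∧
                pp (m+3) (i : ℕ) l < pp (m+3) (i : ℕ) k then 1 else 0)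
            + (if 0 < (i : ℕ) then (if pp (m+3) ((i : ℕ) - 1) k = (m+3) - 1 then 3 else 1) else 0) := by
        rw [Fintype.sum_prod_type]
        have step2 : ∀ (j : Fin r) (l : Fin (m+3)),
            (if ((SimpleGraph.pathGraph r).boxProd (SimpleGraph.cycleGraph (m+3))).Adj (j, l) (i, k) ∧
               ordFn r (m+3) (j, l) < ordFn r (m+3) (i, k) then FFn r (m+3) (j, l) (i, k) else 0)
            = (if j = i then (if (SimpleGraph.cycleGraph (m+3)).Adj l k ∧
                  pp (m+3) (i : ℕ) l < pp (m+3) (i : ℕ) k then 1 else 0) else 0)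
              + (if (j : ℕ) = (i : ℕ) - 1 ∧ 0 < (i : ℕ) then
                  (if l = k then (if pp (m+3) ((i : ℕ) - 1) k = (m+3) - 1 then 3 else 1) else 0) else 0) := by
          intro j l
          have h := hterm (j, l) (i, k)
          dsimp only at h
          rw [h]
          congr 1
          · by_cases hj : j = i
            · subst hj
              by_cases hX : (SimpleGraph.cycleGraph (m+3)).Adj l k ∧
                  pp (m+3) (j : ℕ) l < pp (m+3) (j : ℕ) k
              · rw [if_pos ⟨rfl, hX⟩, if_pos rfl, if_pos hX]
              · rw [if_neg (fun h' => hX h'.2), if_pos rfl, if_neg hX]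
            · rw [if_neg (fun h' => hj h'.1.symm), if_neg hj]
          · by_cases hc : k = l ∧ (i : ℕ) = (j : ℕ) + 1
            · obtain ⟨hkl, hij⟩ := hc
              have hj1 : (j : ℕ) = (i : ℕ) - 1 := by omega
              rw [← hkl, hj1]
              have hc1 : k = k ∧ (i : ℕ) = (i : ℕ) - 1 + 1 := ⟨rfl, by omega⟩
              have hc2 : (i : ℕ) - 1 = (i : ℕ) - 1 ∧ 0 < (i : ℕ) := ⟨rfl, by omega⟩
              rw [if_pos hc1, if_pos hc2, if_pos (rfl : k = k)]
            · rw [if_neg hc]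
              by_cases houter : (j : ℕ) = (i : ℕ) - 1 ∧ 0 < (i : ℕ)
              · rw [if_pos houter, if_neg (fun hlk => hc ⟨hlk.symm, by omega⟩)]
              · rw [if_neg houter]
        simp only [step2, Finset.sum_add_distrib]
        congr 1
        · have e1 : ∀ j : Fin r, (∑ l : Fin (m+3),
              if j = i then (if (SimpleGraph.cycleGraph (m+3)).Adj l k ∧
                pp (m+3) (i : ℕ) l < pp (m+3) (i : ℕ) k then 1 else 0) else 0)
              = (if j = i then (∑ l : Fin (m+3), if (SimpleGraph.cycleGraph (m+3)).Adj l k ∧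
                pp (m+3) (i : ℕ) l < pp (m+3) (i : ℕ) k then 1 else 0) else 0) := by
            intro j
            by_cases hj : j = i <;> simp [hj]
          rw [Finset.sum_congr rfl fun j _ => e1 j]
          rw [Finset.sum_ite_eq' Finset.univ i, if_pos (Finset.mem_univ i)]
        · by_cases hi : 0 < (i : ℕ)
          · have e2 : ∀ j : Fin r, (∑ l : Fin (m+3),
                if (j : ℕ) = (i : ℕ) - 1 ∧ 0 < (i : ℕ) then
                  (if l = k then (if pp (m+3) ((i : ℕ) - 1) k = (m+3) - 1 then 3 else 1) else 0) else 0)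
                = (if (j : ℕ) = (i : ℕ) - 1 then
                    (if pp (m+3) ((i : ℕ) - 1) k = (m+3) - 1 then 3 else 1) else 0) := by
              intro j
              by_cases hf : (j : ℕ) = (i : ℕ) - 1
              · rw [if_pos hf]
                simp [hf, hi]
              · rw [if_neg hf]
                exact Finset.sum_eq_zero fun l _ => if_neg (fun h' => hf h'.1)
            rw [Finset.sum_congr rfl fun j _ => e2 j]
            rw [sum_fin_ite_val (fun _ => if pp (m+3) ((i : ℕ) - 1) k = (m+3) - 1 then 3 else 1)]
            rw [if_pos (by have := i.isLt; omega : (i : ℕ) - 1 < r), if_pos hi]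
          · rw [if_neg hi]
            refine Finset.sum_eq_zero fun j _ => Finset.sum_eq_zero fun l _ => if_neg (fun h' => hi h'.2)
      rw [hL, hR]
      -- abbreviations
      set Hout := (∑ l : Fin (m+3), if (SimpleGraph.cycleGraph (m+3)).Adj k l ∧
          pp (m+3) (i : ℕ) k < pp (m+3) (i : ℕ) l then 1 else 0) with hHoutdef
      set Hin := (∑ l : Fin (m+3), if (SimpleGraph.cycleGraph (m+3)).Adj l k ∧
          pp (m+3) (i : ℕ) l < pp (m+3) (i : ℕ) k then 1 else 0) with hHindef
      set Vout := (if (i : ℕ) + 1 < r then (if pp (m+3) (i : ℕ) k = (m+3) - 1 then 3 else 1) else 0) with hVoutdef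
      set Vin := (if 0 < (i : ℕ) then (if pp (m+3) ((i : ℕ) - 1) k = (m+3) - 1 then 3 else 1) else 0) with hVindef
      have hppk := pp_lt hs0 (i : ℕ) k
      have hdeg : (∑ l : Fin (m+3), if (SimpleGraph.cycleGraph (m+3)).Adj k l then 1 else 0) = 2 := by
        have h1 : (∑ l : Fin (m+3), if (SimpleGraph.cycleGraph (m+3)).Adj k l then 1 else 0)
            = ((SimpleGraph.cycleGraph (m+3)).neighborFinset k).card := by
          rw [SimpleGraph.neighborFinset_eq_filter, Finset.card_filter]
        rw [h1]
        exact SimpleGraph.cycleGraph_degree_three_le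
      have hsplit : ∀ l : Fin (m+3),
          ((if (SimpleGraph.cycleGraph (m+3)).Adj k l ∧
              pp (m+3) (i : ℕ) k < pp (m+3) (i : ℕ) l then 1 else 0) +
           (if (SimpleGraph.cycleGraph (m+3)).Adj l k ∧
              pp (m+3) (i : ℕ) l < pp (m+3) (i : ℕ) k then 1 else 0))
          = (if (SimpleGraph.cycleGraph (m+3)).Adj k l then 1 else 0) := by
        intro l
        by_cases hA : (SimpleGraph.cycleGraph (m+3)).Adj k l
        · have hA' := hA.symm
          have hne : pp (m+3) (i : ℕ) k ≠ pp (m+3) (i : ℕ) l :=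
            fun hh => ((SimpleGraph.cycleGraph (m+3)).ne_of_adj hA) (pp_inj hh)
          by_cases hlt : pp (m+3) (i : ℕ) k < pp (m+3) (i : ℕ) l
          · rw [if_pos ⟨hA, hlt⟩, if_neg (fun hh => absurd hh.2 (by omega)), if_pos hA]
          · rw [if_neg (fun hh => hlt hh.2), if_pos ⟨hA', by omega⟩, if_pos hA]
        · rw [if_neg (fun hh => hA hh.1), if_neg (fun hh => hA hh.1.symm), if_neg hA]
      have hHsum : Hout + Hin = 2 := by
        rw [hHoutdef, hHindef, ← Finset.sum_add_distrib]
        exact (Finset.sum_congr rfl fun l _ => hsplit l).trans hdeg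
      have hHout0 : pp (m+3) (i : ℕ) k = (m+3) - 1 → Hout = 0 := by
        intro hp
        rw [hHoutdef]
        refine Finset.sum_eq_zero fun l _ => if_neg ?_
        rintro ⟨-, hlt⟩
        have := pp_lt hs0 (i : ℕ) l
        omega
      have hHin1 : 0 < pp (m+3) (i : ℕ) k → pp (m+3) (i : ℕ) k < (m+3) - 1 → 1 ≤ Hin := by
        intro hp0 hp1
        have hki := k.isLt
        by_cases hpar : (i : ℕ) % 2 = 0
        · have hk : pp (m+3) (i : ℕ) k = (k : ℕ) := by unfold pp; rw [if_pos hpar]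
          set l₀ : Fin (m+3) := ⟨(k : ℕ) - 1, by omega⟩ with hl₀
          have hkeq : k = ⟨(l₀ : ℕ) + 1, by have : (l₀ : ℕ) = (k : ℕ) - 1 := rfl; omega⟩ := by
            apply Fin.ext
            show (k : ℕ) = (k : ℕ) - 1 + 1
            omega
          have hadj : (SimpleGraph.cycleGraph (m+3)).Adj l₀ k := by
            rw [hkeq]
            exact cyc_adj_succ l₀ (by show (k : ℕ) - 1 + 1 < m + 3; omega)
          have hlt : pp (m+3) (i : ℕ) l₀ < pp (m+3) (i : ℕ) k := by
            unfold pp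
            rw [if_pos hpar, if_pos hpar]
            show (k : ℕ) - 1 < (k : ℕ)
            omega
          calc 1 = (if (SimpleGraph.cycleGraph (m+3)).Adj l₀ k ∧
                pp (m+3) (i : ℕ) l₀ < pp (m+3) (i : ℕ) k then 1 else 0) := by rw [if_pos ⟨hadj, hlt⟩]
            _ ≤ Hin := by
                rw [hHindef]
                exact Finset.single_le_sum (f := fun l => if (SimpleGraph.cycleGraph (m+3)).Adj l k ∧
                  pp (m+3) (i : ℕ) l < pp (m+3) (i : ℕ) k then 1 else 0)
                  (fun _ _ => Nat.zero_le _) (Finset.mem_univ l₀)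
        · have hk : pp (m+3) (i : ℕ) k = (m+3) - 1 - (k : ℕ) := by unfold pp; rw [if_neg hpar]
          set l₀ : Fin (m+3) := ⟨(k : ℕ) + 1, by omega⟩ with hl₀
          have hadj : (SimpleGraph.cycleGraph (m+3)).Adj l₀ k :=
            (cyc_adj_succ k (by omega)).symm
          have hlt : pp (m+3) (i : ℕ) l₀ < pp (m+3) (i : ℕ) k := by
            unfold pp
            rw [if_neg hpar, if_neg hpar]
            show (m+3) - 1 - ((k : ℕ) + 1) < (m+3) - 1 - (k : ℕ)
            omega
          calc 1 = (if (SimpleGraph.cycleGraph (m+3)).Adj l₀ k ∧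
                pp (m+3) (i : ℕ) l₀ < pp (m+3) (i : ℕ) k then 1 else 0) := by rw [if_pos ⟨hadj, hlt⟩]
            _ ≤ Hin := by
                rw [hHindef]
                exact Finset.single_le_sum (f := fun l => if (SimpleGraph.cycleGraph (m+3)).Adj l k ∧
                  pp (m+3) (i : ℕ) l < pp (m+3) (i : ℕ) k then 1 else 0)
                  (fun _ _ => Nat.zero_le _) (Finset.mem_univ l₀)
      have hparity : 0 < (i : ℕ) → pp (m+3) ((i : ℕ) - 1) k = (m+3) - 1 - pp (m+3) (i : ℕ) k := by
        intro hi
        have hki := k.isLt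
        unfold pp
        by_cases hpar : (i : ℕ) % 2 = 0
        · rw [if_pos hpar, if_neg (by omega : ¬ ((i : ℕ) - 1) % 2 = 0)]
        · rw [if_neg hpar, if_pos (by omega : ((i : ℕ) - 1) % 2 = 0)]
          omega
      -- final case analysis
      have hiv := i.isLt
      by_cases hP1 : pp (m+3) (i : ℕ) k = (m+3) - 1
      · have h0 := hHout0 hP1
        have hVout3 : Vout ≤ 3 := by rw [hVoutdef]; split_ifs <;> omega
        by_cases hi : (i : ℕ) = 0
        · have hω : 1 ≤ wFn r (m+3) (i, k) := by
            unfold wFn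
            rw [if_pos hi]
            split <;> omega
          omega
        · have hVin1 : 1 ≤ Vin := by
            rw [hVindef, if_pos (by omega)]
            split <;> omega
          omega
      · have hVout1 : Vout ≤ 1 := by
          rw [hVoutdef, if_neg hP1]
          split <;> omega
        by_cases hP0 : pp (m+3) (i : ℕ) k = 0
        · by_cases hi : (i : ℕ) = 0
          · have hk0 : (k : ℕ) = 0 := by
              have hpe : pp (m+3) (i : ℕ) k = (k : ℕ) := by
                unfold pp
                rw [if_pos (by omega)]
              omega
            have hω : wFn r (m+3) (i, k) = 3 := by
              unfold wFn
              rw [if_pos hi, if_pos hk0]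
            omega
          · have hVin3 : Vin = 3 := by
              rw [hVindef, if_pos (by omega), hparity (by omega), if_pos (by omega)]
            omega
        · have hHin1' : 1 ≤ Hin := hHin1 (by omega) (by omega)
          by_cases hi : (i : ℕ) = 0
          · have hω : 1 ≤ wFn r (m+3) (i, k) := by
              unfold wFn
              rw [if_pos hi]
              split <;> omega
            omega
          · have hVin1 : 1 ≤ Vin := by
              rw [hVindef, if_pos (by omega)]
              split <;> omega
            omega
  · rw [finsum_eq_sum_of_fintype, Fintype.sum_prod_type]
    have hrow : ∀ i : Fin r, (∑ k : Fin (m+3), wFn r (m+3) (i, k))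
        = if (i : ℕ) = 0 then (m+3)+2 else 0 := by
      intro i
      by_cases hi : (i : ℕ) = 0
      · rw [if_pos hi]
        have hpt : ∀ k : Fin (m+3), wFn r (m+3) (i, k) = 1 + (if (k : ℕ) = 0 then 2 else 0) := by
          intro k
          unfold wFn
          rw [if_pos hi]
          by_cases hk : (k : ℕ) = 0
          · rw [if_pos hk, if_pos hk]
          · rw [if_neg hk, if_neg hk]
        rw [Finset.sum_congr rfl fun k _ => hpt k, Finset.sum_add_distrib, Finset.sum_const,
          Finset.card_univ, Fintype.card_fin, smul_eq_mul, mul_one]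
        have h2 : (∑ k : Fin (m+3), if (k : ℕ) = 0 then 2 else 0) = 2 :=
          (sum_fin_ite_val (fun _ => 2)).trans (if_pos (by omega))
        rw [h2]
      · rw [if_neg hi]
        exact Finset.sum_eq_zero fun k _ => by unfold wFn; rw [if_neg hi]
    rw [Finset.sum_congr rfl fun i _ => hrow i]
    exact (sum_fin_ite_val (fun _ => (m+3)+2)).trans (if_pos (by omega))


end Paper
end

section
/- The zero-forcing number of the line graph of P_r □ C_s satisfies Z(L(P_r □ C_s)) ≥ r − 1 for all integers r ≥ 2 and s ≥ 3. -/
open scoped BigOperators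

namespace Paper

variable {V : Type*}

lemma zfclosure_not_mem_fort {G : SimpleGraph V} {S F : Set V}
    (hF : ∀ v w, v ∉ F → w ∈ F → G.Adj v w → ∃ u, u ∈ F ∧ u ≠ w ∧ G.Adj v u)
    (hSF : ∀ x ∈ S, x ∉ F) : ∀ v, ZFClosure G S v → v ∉ F := by
  intro v h
  induction h with
  | init h => exact hSF _ h
  | force hv hadj hall ihv ihall =>
      intro hwF
      obtain ⟨u, huF, huw, hadj'⟩ := hF _ _ ihv hwF hadj
      exact ihall u hadj' huw huF

lemma fort_meets_zfs {G : SimpleGraph V} {S F : Set V}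
    (hZ : IsZeroForcingSet G S) (hne : F.Nonempty)
    (hF : ∀ v w, v ∉ F → w ∈ F → G.Adj v w → ∃ u, u ∈ F ∧ u ≠ w ∧ G.Adj v u) :
    ∃ x, x ∈ S ∧ x ∈ F := by
  by_contra h
  push_neg at h
  obtain ⟨v, hv⟩ := hne
  exact zfclosure_not_mem_fort hF h v (hZ v) hv

open Fin.CommRing in
open SimpleGraph in
lemma key_s14 (r m : ℕ) (hr : 2 ≤ r)
    {S : Set ((pathGraph r).boxProd (cycleGraph (m + 3))).edgeSet}
    (hZ : IsZeroForcingSet ((pathGraph r).boxProd (cycleGraph (m + 3))).lineGraph S) :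
    r ≤ S.ncard := by
  have h2 : (1 + 1 : Fin (m + 3)) ≠ 0 := by
    intro h
    have := congrArg Fin.val h
    rw [Fin.val_add, Fin.val_one, Fin.val_zero, Nat.mod_eq_of_lt (by omega)] at this
    omega
  have hne2 : ∀ j : Fin (m + 3), j + 1 ≠ j - 1 := by
    intro j h
    apply h2
    have h3 : (j + 1) - (j - 1) = 1 + 1 := by ring
    rw [h, sub_self] at h3
    exact h3.symm
  have cycR : ∀ j : Fin (m + 3), (cycleGraph (m + 3)).Adj j (j + 1) := by
    intro j
    rw [cycleGraph_adj]
    right; ring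
  have cycL : ∀ j : Fin (m + 3), (cycleGraph (m + 3)).Adj j (j - 1) := by
    intro j
    rw [cycleGraph_adj]
    left; ring
  have cycDec : ∀ j y : Fin (m + 3), (cycleGraph (m + 3)).Adj j y → y = j + 1 ∨ y = j - 1 := by
    intro j y h
    rw [cycleGraph_adj] at h
    rcases h with h | h
    · right; rw [← h]; ring
    · left; rw [← h]; ring
  set F : Fin r → Set ((pathGraph r).boxProd (cycleGraph (m + 3))).edgeSet :=
    fun i => {e | ∀ x ∈ (e : Sym2 (Fin r × Fin (m + 3))), x.1 = i} with hFdef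
  have hEmem : ∀ (i : Fin r) (j j' : Fin (m + 3)), (cycleGraph (m + 3)).Adj j j' →
      s((i, j), (i, j')) ∈ ((pathGraph r).boxProd (cycleGraph (m + 3))).edgeSet := by
    intro i j j' h
    rw [mem_edgeSet, boxProd_adj_right]
    exact h
  have hne : ∀ i : Fin r, (F i).Nonempty := by
    intro i
    refine ⟨⟨s((i, 0), (i, 0 + 1)), hEmem i 0 (0 + 1) (cycR 0)⟩, ?_⟩
    intro x hx
    rw [Sym2.mem_iff] at hx
    rcases hx with rfl | rfl <;> rfl
  have hfort : ∀ i : Fin r, ∀ v w, v ∉ F i → w ∈ F i →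
      ((pathGraph r).boxProd (cycleGraph (m + 3))).lineGraph.Adj v w →
      ∃ u, u ∈ F i ∧ u ≠ w ∧ ((pathGraph r).boxProd (cycleGraph (m + 3))).lineGraph.Adj v u := by
    rintro i ⟨v, hv⟩ ⟨w, hw⟩ hvF hwF hadj
    rw [lineGraph_adj_iff_exists] at hadj
    obtain ⟨hne', x, hxv, hxw⟩ := hadj
    have hx1 : x.1 = i := hwF _ hxw
    have hx : x = (i, x.2) := Prod.ext hx1 rfl
    rw [hx] at hxv hxw
    set j := x.2 with hj
    -- v has an endpoint outside row i
    simp only [hFdef, Set.mem_setOf_eq] at hvF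
    push_neg at hvF
    obtain ⟨y, hyv, hy1⟩ := hvF
    -- w = s((i,j), z) with z = (i, j ± 1)
    obtain ⟨z, hwz⟩ := Sym2.mem_iff_exists.mp hxw
    have hwz' : w = s((i, j), z) := hwz
    have hz1 : z.1 = i := hwF z (by show z ∈ w; rw [hwz']; exact Sym2.mem_mk_right _ _)
    have hwadj : ((pathGraph r).boxProd (cycleGraph (m + 3))).Adj (i, j) z := by
      have h' := hw
      rw [hwz', mem_edgeSet] at h'
      exact h'
    have hz2 : z.2 = j + 1 ∨ z.2 = j - 1 := by
      rcases (boxProd_adj).mp hwadj with ⟨hp, _⟩ | ⟨hc, _⟩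
      · rw [hz1] at hp; exact absurd hp (SimpleGraph.irrefl _)
      · exact cycDec _ _ hc
    have hzeq : z = (i, z.2) := Prod.ext hz1 rfl
    have hvrow : ∀ j' : Fin (m + 3), v ≠ s((i, j), (i, j')) := by
      intro j' hveq
      apply hy1
      rw [hveq, Sym2.mem_iff] at hyv
      rcases hyv with rfl | rfl <;> rfl
    rcases hz2 with hz | hz
    · refine ⟨⟨s((i, j), (i, j - 1)), hEmem i j (j - 1) (cycL j)⟩, ?_, ?_, ?_⟩
      · intro x hx
        rw [Sym2.mem_iff] at hx
        rcases hx with rfl | rfl <;> rfl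
      · intro hcon
        rw [Subtype.mk_eq_mk, hwz', hzeq, hz, Sym2.congr_right, Prod.mk.injEq] at hcon
        exact hne2 j (hcon.2.symm)
      · rw [lineGraph_adj_iff_exists]
        exact ⟨by simpa [Subtype.ext_iff] using hvrow (j - 1),
          (i, j), hxv, Sym2.mem_mk_left _ _⟩
    · refine ⟨⟨s((i, j), (i, j + 1)), hEmem i j (j + 1) (cycR j)⟩, ?_, ?_, ?_⟩
      · intro x hx
        rw [Sym2.mem_iff] at hx
        rcases hx with rfl | rfl <;> rfl
      · intro hcon
        rw [Subtype.mk_eq_mk, hwz', hzeq, hz, Sym2.congr_right, Prod.mk.injEq] at hcon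
        exact hne2 j hcon.2
      · rw [lineGraph_adj_iff_exists]
        exact ⟨by simpa [Subtype.ext_iff] using hvrow (j + 1),
          (i, j), hxv, Sym2.mem_mk_left _ _⟩
  have hpick : ∀ i : Fin r, ∃ x, x ∈ S ∧ x ∈ F i :=
    fun i => fort_meets_zfs hZ (hne i) (hfort i)
  choose f hfS hfF using hpick
  have hinj : Function.Injective f := by
    intro i₁ i₂ h
    have hm := Sym2.out_fst_mem ((f i₁ : Sym2 (Fin r × Fin (m + 3))))
    have e1 := hfF i₁ _ hm
    rw [h] at hm
    have e2 := hfF i₂ _ hm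
    rw [← e1, ← e2, h]
  have hsub : Set.range f ⊆ S := by rintro _ ⟨i, rfl⟩; exact hfS i
  calc r = (Set.range f).ncard := by
        rw [← Set.image_univ, Set.ncard_image_of_injective _ hinj, Set.ncard_univ,
          Nat.card_eq_fintype_card, Fintype.card_fin]
    _ ≤ S.ncard := Set.ncard_le_ncard hsub (Set.toFinite S)


theorem zfNumber_lineGraph_pathGraph_boxProd_cycleGraph (r s : ℕ) (hr : 2 ≤ r)
    (hs : 3 ≤ s) :
    r - 1 ≤ zfNumber ((SimpleGraph.pathGraph r).boxProd (SimpleGraph.cycleGraph s)).lineGraph := by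
  obtain ⟨m, rfl⟩ : ∃ m, s = m + 3 := ⟨s - 3, by omega⟩
  refine le_csInf ?_ ?_
  · exact ⟨Set.univ.ncard, Set.univ, fun v => ZFClosure.init (Set.mem_univ v), rfl⟩
  rintro n ⟨S, hZ, rfl⟩
  have hkey := key_s14 r m hr hZ
  omega

end Paper
end
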